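/- arXiv:2502.11348 — 6 statements merged into one kernel-verified Lean document; each statement's English description precedes it below -/
import Mathlib

section
/- (Lemma 3.3(iv)) Assume (d2,q2) ∈ S1 and let (u,v) be a positive equilibrium. Then there do not exist integers l_1^*, l_2^*, l_* with 0 ≤ l_i^* ≤ m_i for i = 1,2 and 1 ≤ l_* ≤ m3 such that: f^i_k ≤ 0 and g^i_k ≤ 0 for i = 1,2 and all 1 ≤ k ≤ l_i^*; f^3_k ≤ 0 and g^3_k ≤ 0 for all l_*+1 ≤ k ≤ m3; f^3_{l_*} ≤ 0, g^1_{l_1^*+1} ≤ 0, g^2_{l_2^*+1} ≤ 0; and g^3_{l_*} ≥ 0, f^1_{l_1^*+1} ≥ 0, f^2_{l_2^*+1} ≥ 0. -/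
open Finset Filter

noncomputable section

/-- Length of river segment `i` (segments are numbered 1, 2, 3; segments 1 and 2 are the
branches, segment 3 is the main river). -/
def seg (m1 m2 m3 : ℕ) (i : ℕ) : ℕ := if i = 1 then m1 else if i = 2 then m2 else m3

/-- `w` is positive on all patches of the Y-shaped network. -/
def YPos (m1 m2 m3 : ℕ) (w : ℕ → ℕ → ℝ) : Prop :=
  ∀ i k, (i = 1 ∨ i = 2 ∨ i = 3) → 1 ≤ k → k ≤ seg m1 m2 m3 i → 0 < w i k

/-- Steady-state equations on the Y-shaped network for one species `w` with dispersal rate `d`,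
drift rate `q`, intrinsic growth rate `r`, and competitor density `c` (take `c = 0` for the
single-species model).  The convention `w i 0 = w 3 m3` (for `i = 1, 2`) is part of
the predicate. -/
def YEq (m1 m2 m3 : ℕ) (d q r : ℝ) (w c : ℕ → ℕ → ℝ) : Prop :=
  w 1 0 = w 3 m3 ∧ w 2 0 = w 3 m3 ∧
  (∀ i, (i = 1 ∨ i = 2) → ∀ k, 1 ≤ k → k + 1 ≤ seg m1 m2 m3 i →
    d * w i (k - 1) - (2 * d + q) * w i k + (d + q) * w i (k + 1)
      + w i k * (r - w i k - c i k) = 0) ∧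
  (∀ k, 2 ≤ k → k + 1 ≤ m3 →
    d * w 3 (k - 1) - (2 * d + q) * w 3 k + (d + q) * w 3 (k + 1)
      + w 3 k * (r - w 3 k - c 3 k) = 0) ∧
  (∀ i, (i = 1 ∨ i = 2) →
    -(d + q) * w i (seg m1 m2 m3 i) + d * w i (seg m1 m2 m3 i - 1)
      + w i (seg m1 m2 m3 i) * (r - w i (seg m1 m2 m3 i) - c i (seg m1 m2 m3 i)) = 0) ∧
  (-d * w 3 1 + (d + q) * w 3 2 + w 3 1 * (r - w 3 1 - c 3 1) = 0) ∧
  (d * w 3 (m3 - 1) - (3 * d + q) * w 3 m3 + (d + q) * (w 1 1 + w 2 1)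
    + w 3 m3 * (r - w 3 m3 - c 3 m3) = 0)

/-- Positive equilibrium of the two-species competition patch model on the Y-shaped network. -/
def YPosEquilibrium (m1 m2 m3 : ℕ) (d1 q1 d2 q2 r : ℝ) (u v : ℕ → ℕ → ℝ) : Prop :=
  YPos m1 m2 m3 u ∧ YPos m1 m2 m3 v ∧
  YEq m1 m2 m3 d1 q1 r u v ∧ YEq m1 m2 m3 d2 q2 r v u

/-- Single-species positive equilibrium for parameters `(d, q)`. -/
def YSingleEquilibrium (m1 m2 m3 : ℕ) (d q r : ℝ) (w : ℕ → ℕ → ℝ) : Prop :=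
  YPos m1 m2 m3 w ∧ YEq m1 m2 m3 d q r w (fun _ _ => 0)

/-- The auxiliary flux sequence (`f` when built from `u` with `(d1, q1)`, `g` when built
from `v` with `(d2, q2)`): `Yf ... d q w i k = d * w i (k-1) - (d+q) * w i k` on the index
range `1 ≤ k ≤ mᵢ` for `i = 1,2` and `2 ≤ k ≤ m3` for `i = 3`, and `0` otherwise (in
particular `f 3 1 = 0` and `f i (mᵢ + 1) = 0` for `i = 1, 2`). -/
def Yf (m1 m2 m3 : ℕ) (d q : ℝ) (w : ℕ → ℕ → ℝ) (i k : ℕ) : ℝ :=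
  if i = 3 then (if 2 ≤ k ∧ k ≤ m3 then d * w 3 (k - 1) - (d + q) * w 3 k else 0)
  else (if 1 ≤ k ∧ k ≤ seg m1 m2 m3 i then d * w i (k - 1) - (d + q) * w i k else 0)

/-- The auxiliary sequence `h` built from `v`, on the same index range as `Yf`. -/
def Yh (m1 m2 m3 : ℕ) (d1 q1 d2 q2 : ℝ) (v : ℕ → ℕ → ℝ) (i k : ℕ) : ℝ :=
  if i = 3 then
    (if 2 ≤ k ∧ k ≤ m3 then (d1 - d2) * (v 3 (k - 1) - v 3 k) - (q1 - q2) * v 3 k else 0)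
  else
    (if 1 ≤ k ∧ k ≤ seg m1 m2 m3 i then
      (d1 - d2) * (v i (k - 1) - v i k) - (q1 - q2) * v i k else 0)

/-- `(d, q)` belongs to the region `S1`. -/
def S1mem (d1 q1 d q : ℝ) : Prop :=
  0 < d ∧ d ≤ d1 ∧ 0 < q ∧ q ≤ (q1 / d1) * d ∧ (d, q) ≠ (d1, q1)

/-- `(d, q)` belongs to the region `S2`. -/
def S2mem (d1 q1 d q : ℝ) : Prop :=
  d1 ≤ d ∧ (q1 / d1) * d ≤ q ∧ (d, q) ≠ (d1, q1)

/-- The linearization at a semi-trivial equilibrium `(a, 0)`, with eigenvalue `0`: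
`ψ` solves the linearized system for parameters `(d, q)` with potential `r - a`. -/
def YLinEq (m1 m2 m3 : ℕ) (d q r : ℝ) (a ψ : ℕ → ℕ → ℝ) : Prop :=
  ψ 1 0 = ψ 3 m3 ∧ ψ 2 0 = ψ 3 m3 ∧
  (∀ i, (i = 1 ∨ i = 2) → ∀ k, 1 ≤ k → k + 1 ≤ seg m1 m2 m3 i →
    d * ψ i (k - 1) - (2 * d + q) * ψ i k + (d + q) * ψ i (k + 1)
      + (r - a i k) * ψ i k = 0) ∧
  (∀ k, 2 ≤ k → k + 1 ≤ m3 →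
    d * ψ 3 (k - 1) - (2 * d + q) * ψ 3 k + (d + q) * ψ 3 (k + 1)
      + (r - a 3 k) * ψ 3 k = 0) ∧
  (∀ i, (i = 1 ∨ i = 2) →
    -(d + q) * ψ i (seg m1 m2 m3 i) + d * ψ i (seg m1 m2 m3 i - 1)
      + (r - a i (seg m1 m2 m3 i)) * ψ i (seg m1 m2 m3 i) = 0) ∧
  (-d * ψ 3 1 + (d + q) * ψ 3 2 + (r - a 3 1) * ψ 3 1 = 0) ∧
  (d * ψ 3 (m3 - 1) - (3 * d + q) * ψ 3 m3 + (d + q) * (ψ 1 1 + ψ 2 1)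
    + (r - a 3 m3) * ψ 3 m3 = 0)

/-- Time-dependent equations for one species `W` with competitor `C` on the Y-shaped network
(for `t ≥ 0`), with dispersal rate `d`, drift rate `q` and intrinsic growth rate `r`. -/
def YFlow (m1 m2 m3 : ℕ) (d q r : ℝ) (W C : ℕ → ℕ → ℝ → ℝ) : Prop :=
  (∀ t : ℝ, W 1 0 t = W 3 m3 t) ∧ (∀ t : ℝ, W 2 0 t = W 3 m3 t) ∧
  (∀ i, (i = 1 ∨ i = 2) → ∀ k, 1 ≤ k → k + 1 ≤ seg m1 m2 m3 i → ∀ t : ℝ, 0 ≤ t →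
    HasDerivAt (W i k)
      (d * W i (k - 1) t - (2 * d + q) * W i k t + (d + q) * W i (k + 1) t
        + W i k t * (r - W i k t - C i k t)) t) ∧
  (∀ k, 2 ≤ k → k + 1 ≤ m3 → ∀ t : ℝ, 0 ≤ t →
    HasDerivAt (W 3 k)
      (d * W 3 (k - 1) t - (2 * d + q) * W 3 k t + (d + q) * W 3 (k + 1) t
        + W 3 k t * (r - W 3 k t - C 3 k t)) t) ∧
  (∀ i, (i = 1 ∨ i = 2) → ∀ t : ℝ, 0 ≤ t →
    HasDerivAt (W i (seg m1 m2 m3 i))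
      (-(d + q) * W i (seg m1 m2 m3 i) t + d * W i (seg m1 m2 m3 i - 1) t
        + W i (seg m1 m2 m3 i) t
          * (r - W i (seg m1 m2 m3 i) t - C i (seg m1 m2 m3 i) t)) t) ∧
  (∀ t : ℝ, 0 ≤ t →
    HasDerivAt (W 3 1)
      (-d * W 3 1 t + (d + q) * W 3 2 t + W 3 1 t * (r - W 3 1 t - C 3 1 t)) t) ∧
  (∀ t : ℝ, 0 ≤ t →
    HasDerivAt (W 3 m3)
      (d * W 3 (m3 - 1) t - (3 * d + q) * W 3 m3 t + (d + q) * (W 1 1 t + W 2 1 t)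
        + W 3 m3 t * (r - W 3 m3 t - C 3 m3 t)) t)

/-- Solution of the two-species competition patch model on the Y-shaped network. -/
def YSolution (m1 m2 m3 : ℕ) (d1 q1 d2 q2 r : ℝ) (U V : ℕ → ℕ → ℝ → ℝ) : Prop :=
  YFlow m1 m2 m3 d1 q1 r U V ∧ YFlow m1 m2 m3 d2 q2 r V U

/-- Nonnegative, not identically zero initial data. -/
def YInit (m1 m2 m3 : ℕ) (W : ℕ → ℕ → ℝ → ℝ) : Prop :=
  (∀ i k, (i = 1 ∨ i = 2 ∨ i = 3) → 1 ≤ k → k ≤ seg m1 m2 m3 i → 0 ≤ W i k 0) ∧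
  (∃ i k, (i = 1 ∨ i = 2 ∨ i = 3) ∧ 1 ≤ k ∧ k ≤ seg m1 m2 m3 i ∧ 0 < W i k 0)

/-- Flux auxiliary quantity. -/
def Flux (d q : ℝ) (w : ℕ → ℝ) (k : ℕ) : ℝ := d * w (k - 1) - (d + q) * w k

lemma keyId (d1 q1 d2 q2 : ℝ) (x y : ℕ → ℝ) (k : ℕ) :
    d1 * d2 * (Flux d1 q1 x (k+1) * y k - Flux d2 q2 y (k+1) * x k)
      = d2 * (d1 + q1) * (Flux d1 q1 x (k+1) * y (k+1) - Flux d2 q2 y (k+1) * x (k+1))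
        + (d1 - d2) * (Flux d1 q1 x (k+1) * Flux d2 q2 y (k+1))
        + (d1 * q2 - d2 * q1) * (Flux d1 q1 x (k+1) * y (k+1)) := by
  simp only [Flux, Nat.add_sub_cancel]
  ring

lemma lemKey (d1 q1 d2 q2 F G uu vv A : ℝ)
    (hd1 : 0 < d1) (hq1 : 0 < q1) (hd2 : 0 < d2)
    (hdle : d2 ≤ d1) (hqle : d1 * q2 ≤ d2 * q1) (hne : ¬(d2 = d1 ∧ q2 = q1))
    (hu : 0 < uu) (hv : 0 < vv) (hF : F ≤ 0) (hG : G ≤ 0)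
    (hid : d1 * d2 * A
        = d2 * (d1 + q1) * (F * vv - G * uu) + (d1 - d2) * (F * G)
          + (d1 * q2 - d2 * q1) * (F * vv)) :
    (A ≤ 0 → F * vv - G * uu ≤ 0) ∧ (0 ≤ F * vv - G * uu → 0 ≤ A) ∧
      (A = 0 → 0 ≤ F * vv - G * uu → F = 0 ∧ G = 0) := by
  have hFG : 0 ≤ F * G := by nlinarith
  have t1 : 0 ≤ (d1 - d2) * (F * G) := mul_nonneg (by linarith) hFG
  have hFv : F * vv ≤ 0 := by nlinarith
  have t2 : 0 ≤ (d1 * q2 - d2 * q1) * (F * vv) := by nlinarith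
  have hc : 0 < d2 * (d1 + q1) := mul_pos hd2 (by linarith)
  have hcc : 0 < d1 * d2 := mul_pos hd1 hd2
  refine ⟨?_, ?_, ?_⟩
  · intro hA
    have h1 : d2 * (d1 + q1) * (F * vv - G * uu) ≤ 0 := by nlinarith
    by_contra hW
    push_neg at hW
    nlinarith [mul_pos hc hW]
  · intro hW
    have h1 : 0 ≤ d1 * d2 * A := by nlinarith [mul_nonneg hc.le hW]
    by_contra hA
    push_neg at hA
    nlinarith [mul_pos hcc (neg_pos.mpr hA)]
  · intro hA hW
    rw [hA, mul_zero] at hid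
    have hcW : d2 * (d1 + q1) * (F * vv - G * uu) ≤ 0 := by linarith
    have hcW' : 0 ≤ d2 * (d1 + q1) * (F * vv - G * uu) := mul_nonneg hc.le hW
    have hWz : F * vv - G * uu = 0 := by
      rcases mul_eq_zero.mp (le_antisymm hcW hcW') with h | h
      · exact absurd h hc.ne'
      · exact h
    have hsum1 : (d1 - d2) * (F * G) = 0 := by
      rw [hWz, mul_zero] at hid; linarith
    have hsum2 : (d1 * q2 - d2 * q1) * (F * vv) = 0 := by
      rw [hWz, mul_zero] at hid; linarith
    rcases lt_or_eq_of_le hqle with hlt | heq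
    · have hFv0 : F * vv = 0 := by
        rcases mul_eq_zero.mp hsum2 with h | h
        · exfalso; linarith
        · exact h
      have hF0 : F = 0 := by
        rcases mul_eq_zero.mp hFv0 with h | h
        · exact h
        · exact absurd h hv.ne'
      refine ⟨hF0, ?_⟩
      have : G * uu = 0 := by rw [hF0] at hWz; linarith
      rcases mul_eq_zero.mp this with h | h
      · exact h
      · exact absurd h hu.ne'
    · have hd2lt : d2 < d1 := by
        rcases lt_or_eq_of_le hdle with h | h
        · exact h
        · exfalso
          apply hne
          refine ⟨h, ?_⟩
          have : d1 * q2 = d1 * q1 := by rw [heq, h]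
          exact mul_left_cancel₀ hd1.ne' this
      have hFG0 : F * G = 0 := by
        rcases mul_eq_zero.mp hsum1 with h | h
        · exfalso; linarith
        · exact h
      rcases mul_eq_zero.mp hFG0 with hF0 | hG0
      · refine ⟨hF0, ?_⟩
        have : G * uu = 0 := by rw [hF0] at hWz; linarith
        rcases mul_eq_zero.mp this with h | h
        · exact h
        · exact absurd h hu.ne'
      · refine ⟨?_, hG0⟩
        have : F * vv = 0 := by rw [hG0] at hWz; linarith
        rcases mul_eq_zero.mp this with h | h
        · exact h
        · exact absurd h hv.ne'

lemma opp_split (F G uu vv : ℝ) (hu : 0 < uu) (hv : 0 < vv)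
    (hF : F ≤ 0) (hG : 0 ≤ G) (hW : F * vv - G * uu = 0) : F = 0 ∧ G = 0 := by
  have h1 : F * vv ≤ 0 := by nlinarith
  have h2 : 0 ≤ G * uu := by nlinarith
  have h3 : F * vv = 0 := by linarith
  have h4 : G * uu = 0 := by linarith
  constructor
  · rcases mul_eq_zero.mp h3 with h | h
    · exact h
    · exact absurd h hv.ne'
  · rcases mul_eq_zero.mp h4 with h | h
    · exact h
    · exact absurd h hu.ne'

lemma opp_split' (F G uu vv : ℝ) (hu : 0 < uu) (hv : 0 < vv)
    (hF : 0 ≤ F) (hG : G ≤ 0) (hW : F * vv - G * uu = 0) : F = 0 ∧ G = 0 := by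
  have h := opp_split (-F) (-G) uu vv hu hv (by linarith) (by linarith) (by linarith)
  constructor <;> linarith [h.1, h.2]
lemma branch_chain (d1 q1 d2 q2 r : ℝ) (m l : ℕ) (x y : ℕ → ℝ)
    (hd1 : 0 < d1) (hq1 : 0 < q1) (hd2 : 0 < d2)
    (hdle : d2 ≤ d1) (hqle : d1 * q2 ≤ d2 * q1) (hne : ¬(d2 = d1 ∧ q2 = q1))
    (hm : 1 ≤ m) (hlm : l ≤ m)
    (hx : ∀ k, k ≤ m → 0 < x k) (hy : ∀ k, k ≤ m → 0 < y k)
    (hxeq : ∀ k, 1 ≤ k → k ≤ m - 1 →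
      Flux d1 q1 x k - Flux d1 q1 x (k+1) + x k * (r - x k - y k) = 0)
    (hxend : Flux d1 q1 x m + x m * (r - x m - y m) = 0)
    (hyeq : ∀ k, 1 ≤ k → k ≤ m - 1 →
      Flux d2 q2 y k - Flux d2 q2 y (k+1) + y k * (r - y k - x k) = 0)
    (hyend : Flux d2 q2 y m + y m * (r - y m - x m) = 0)
    (hsgn : ∀ k, 1 ≤ k → k ≤ l → Flux d1 q1 x k ≤ 0 ∧ Flux d2 q2 y k ≤ 0)
    (hpf : l + 1 ≤ m → 0 ≤ Flux d1 q1 x (l+1))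
    (hpg : l + 1 ≤ m → Flux d2 q2 y (l+1) ≤ 0) :
    0 ≤ Flux d1 q1 x 1 * y 0 - Flux d2 q2 y 1 * x 0 ∧
      (Flux d1 q1 x 1 * y 0 - Flux d2 q2 y 1 * x 0 = 0 →
        Flux d1 q1 x 1 = 0 ∧ Flux d2 q2 y 1 = 0) := by
  have hWA : ∀ k, 1 ≤ k → k ≤ m - 1 →
      Flux d1 q1 x k * y k - Flux d2 q2 y k * x k
        = Flux d1 q1 x (k+1) * y k - Flux d2 q2 y (k+1) * x k := by
    intro k h1 h2
    have hu := hxeq k h1 h2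
    have hv := hyeq k h1 h2
    linear_combination (y k) * hu - (x k) * hv
  rcases Nat.eq_zero_or_pos l with hl0 | hl1
  · -- l = 0 : pivot at 1 directly
    subst hl0
    have hF1 : 0 ≤ Flux d1 q1 x 1 := hpf (by omega)
    have hG1 : Flux d2 q2 y 1 ≤ 0 := hpg (by omega)
    have hx0 := hx 0 (by omega)
    have hy0 := hy 0 (by omega)
    constructor
    · nlinarith
    · intro hA0
      exact opp_split' _ _ _ _ hx0 hy0 hF1 hG1 hA0
  · -- 1 ≤ l
    have hWm : Flux d1 q1 x m * y m - Flux d2 q2 y m * x m = 0 := by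
      linear_combination (y m) * hxend - (x m) * hyend
    -- downward chain: 0 ≤ W k for 1 ≤ k ≤ l
    have bw : ∀ j, ∀ k, k + j = l → 1 ≤ k →
        0 ≤ Flux d1 q1 x k * y k - Flux d2 q2 y k * x k := by
      intro j
      induction j with
      | zero =>
        intro k hk h1
        have hkl : k = l := by omega
        subst hkl
        rcases eq_or_lt_of_le hlm with hml | hml
        · rw [hml, hWm]
        · have hW := hWA k h1 (by omega)
          rw [hW]
          have hF := hpf (by omega)
          have hG := hpg (by omega)
          nlinarith [hx k (by omega), hy k (by omega)]
      | succ j ih =>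
        intro k hk h1
        have hWk1 : 0 ≤ Flux d1 q1 x (k+1) * y (k+1) - Flux d2 q2 y (k+1) * x (k+1) :=
          ih (k+1) (by omega) (by omega)
        have hs := hsgn (k+1) (by omega) (by omega)
        have hid := keyId d1 q1 d2 q2 x y k
        have hKey := lemKey d1 q1 d2 q2 (Flux d1 q1 x (k+1)) (Flux d2 q2 y (k+1))
          (x (k+1)) (y (k+1)) (Flux d1 q1 x (k+1) * y k - Flux d2 q2 y (k+1) * x k)
          hd1 hq1 hd2 hdle hqle hne (hx (k+1) (by omega)) (hy (k+1) (by omega))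
          hs.1 hs.2 hid
        have hA := hKey.2.1 hWk1
        rw [hWA k h1 (by omega)]
        exact hA
    have hW1 : 0 ≤ Flux d1 q1 x 1 * y 1 - Flux d2 q2 y 1 * x 1 :=
      bw (l - 1) 1 (by omega) (by omega)
    have hs1 := hsgn 1 (by omega) hl1
    have hid0 := keyId d1 q1 d2 q2 x y 0
    have hKey0 := lemKey d1 q1 d2 q2 (Flux d1 q1 x 1) (Flux d2 q2 y 1)
      (x 1) (y 1) (Flux d1 q1 x 1 * y 0 - Flux d2 q2 y 1 * x 0)
      hd1 hq1 hd2 hdle hqle hne (hx 1 (by omega)) (hy 1 (by omega))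
      hs1.1 hs1.2 hid0
    exact ⟨hKey0.2.1 hW1, fun hA0 => hKey0.2.2 hA0 hW1⟩
lemma seg3_chain (d1 q1 d2 q2 r : ℝ) (m ls : ℕ) (x y : ℕ → ℝ)
    (hd1 : 0 < d1) (hq1 : 0 < q1) (hd2 : 0 < d2)
    (hdle : d2 ≤ d1) (hqle : d1 * q2 ≤ d2 * q1) (hne : ¬(d2 = d1 ∧ q2 = q1))
    (hm : 2 ≤ m) (hls1 : 1 ≤ ls) (hlsm : ls ≤ m)
    (hx : ∀ k, 1 ≤ k → k ≤ m → 0 < x k) (hy : ∀ k, 1 ≤ k → k ≤ m → 0 < y k)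
    (hxeq : ∀ k, 2 ≤ k → k ≤ m - 1 →
      Flux d1 q1 x k - Flux d1 q1 x (k+1) + x k * (r - x k - y k) = 0)
    (hx1 : -Flux d1 q1 x 2 + x 1 * (r - x 1 - y 1) = 0)
    (hyeq : ∀ k, 2 ≤ k → k ≤ m - 1 →
      Flux d2 q2 y k - Flux d2 q2 y (k+1) + y k * (r - y k - x k) = 0)
    (hy1 : -Flux d2 q2 y 2 + y 1 * (r - y 1 - x 1) = 0)
    (hsgn : ∀ k, ls + 1 ≤ k → k ≤ m → Flux d1 q1 x k ≤ 0 ∧ Flux d2 q2 y k ≤ 0)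
    (hpf : 2 ≤ ls → Flux d1 q1 x ls ≤ 0) (hpg : 2 ≤ ls → 0 ≤ Flux d2 q2 y ls) :
    (Flux d1 q1 x m * y m - Flux d2 q2 y m * x m ≤ 0) ∧
      (Flux d1 q1 x m * y m - Flux d2 q2 y m * x m = 0 →
        Flux d1 q1 x m = 0 ∧ Flux d2 q2 y m = 0) := by
  have hWA : ∀ k, 2 ≤ k → k ≤ m - 1 →
      Flux d1 q1 x k * y k - Flux d2 q2 y k * x k
        = Flux d1 q1 x (k+1) * y k - Flux d2 q2 y (k+1) * x k := by
    intro k h1 h2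
    have hu := hxeq k h1 h2
    have hv := hyeq k h1 h2
    linear_combination (y k) * hu - (x k) * hv
  have hA2 : Flux d1 q1 x 2 * y 1 - Flux d2 q2 y 2 * x 1 = 0 := by
    linear_combination (-(y 1)) * hx1 + (x 1) * hy1
  -- generic upward chain from a base point k0
  have chain : ∀ k0, 2 ≤ k0 → ls ≤ k0 →
      (Flux d1 q1 x k0 * y k0 - Flux d2 q2 y k0 * x k0 ≤ 0) →
      ∀ j, ∀ k, k = k0 + j → k ≤ m →
        Flux d1 q1 x k * y k - Flux d2 q2 y k * x k ≤ 0 := by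
    intro k0 h2 hlsk hbase j
    induction j with
    | zero =>
      intro k hk hkm
      have : k = k0 := by omega
      rw [this]; exact hbase
    | succ j ih =>
      intro k hk hkm
      obtain rfl : k = (k0 + j) + 1 := by omega
      have hWk : Flux d1 q1 x (k0+j) * y (k0+j) - Flux d2 q2 y (k0+j) * x (k0+j) ≤ 0 :=
        ih (k0 + j) rfl (by omega)
      have hpatch := hWA (k0+j) (by omega) (by omega)
      rw [hpatch] at hWk
      have hs := hsgn (k0+j+1) (by omega) (by omega)
      have hid := keyId d1 q1 d2 q2 x y (k0+j)
      have hKey := lemKey d1 q1 d2 q2 (Flux d1 q1 x (k0+j+1)) (Flux d2 q2 y (k0+j+1))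
        (x (k0+j+1)) (y (k0+j+1))
        (Flux d1 q1 x (k0+j+1) * y (k0+j) - Flux d2 q2 y (k0+j+1) * x (k0+j))
        hd1 hq1 hd2 hdle hqle hne (hx (k0+j+1) (by omega) (by omega))
        (hy (k0+j+1) (by omega) (by omega)) hs.1 hs.2 hid
      exact hKey.1 hWk
  -- an upward-chain bound valid on [max(ls,2), m]
  have upAll : ∀ k, ls ≤ k → 2 ≤ k → k ≤ m →
      Flux d1 q1 x k * y k - Flux d2 q2 y k * x k ≤ 0 := by
    rcases le_or_gt 2 ls with hcase | hcase
    · intro k h1 h2 h3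
      have hbase : Flux d1 q1 x ls * y ls - Flux d2 q2 y ls * x ls ≤ 0 := by
        have hF := hpf hcase
        have hG := hpg hcase
        nlinarith [hx ls (by omega) hlsm, hy ls (by omega) hlsm]
      exact chain ls hcase le_rfl hbase (k - ls) k (by omega) h3
    · -- ls = 1
      intro k h1 h2 h3
      have hbase : Flux d1 q1 x 2 * y 2 - Flux d2 q2 y 2 * x 2 ≤ 0 := by
        have hs := hsgn 2 (by omega) hm
        have hid := keyId d1 q1 d2 q2 x y 1
        have hKey := lemKey d1 q1 d2 q2 (Flux d1 q1 x 2) (Flux d2 q2 y 2)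
          (x 2) (y 2) (Flux d1 q1 x 2 * y 1 - Flux d2 q2 y 2 * x 1)
          hd1 hq1 hd2 hdle hqle hne (hx 2 (by omega) hm) (hy 2 (by omega) hm)
          hs.1 hs.2 hid
        exact hKey.1 (le_of_eq hA2)
      exact chain 2 le_rfl (by omega) hbase (k - 2) k (by omega) h3
  have hWmle : Flux d1 q1 x m * y m - Flux d2 q2 y m * x m ≤ 0 :=
    upAll m hlsm hm le_rfl
  refine ⟨hWmle, ?_⟩
  intro hWm0
  rcases eq_or_lt_of_le hlsm with hlsm' | hlsm'
  · -- ls = m : pivot split at m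
    have hF := hpf (by omega)
    have hG := hpg (by omega)
    rw [hlsm'] at hF hG
    exact opp_split _ _ _ _ (hx m (by omega) le_rfl) (hy m (by omega) le_rfl) hF hG hWm0
  · -- ls < m
    rcases eq_or_lt_of_le hm with hm2 | hm3
    · -- m = 2, so ls = 1
      have hls' : ls = 1 := by omega
      have hid := keyId d1 q1 d2 q2 x y 1
      have hs := hsgn 2 (by omega) hm
      have hKey := lemKey d1 q1 d2 q2 (Flux d1 q1 x 2) (Flux d2 q2 y 2)
        (x 2) (y 2) (Flux d1 q1 x 2 * y 1 - Flux d2 q2 y 2 * x 1)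
        hd1 hq1 hd2 hdle hqle hne (hx 2 (by omega) hm) (hy 2 (by omega) hm)
        hs.1 hs.2 hid
      have hWm0' : Flux d1 q1 x 2 * y 2 - Flux d2 q2 y 2 * x 2 = 0 := by
        rw [← hm2] at hWm0; exact hWm0
      have h22 := hKey.2.2 hA2 (le_of_eq hWm0'.symm)
      rw [← hm2]
      exact h22
    · -- m ≥ 3
      have hWm1le : Flux d1 q1 x (m-1) * y (m-1) - Flux d2 q2 y (m-1) * x (m-1) ≤ 0 :=
        upAll (m-1) (by omega) (by omega) (by omega)
      have hpatch := hWA (m-1) (by omega) (by omega)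
      rw [show m - 1 + 1 = m by omega] at hpatch
      rw [hpatch] at hWm1le
      have hs := hsgn m (by omega) le_rfl
      have hid := keyId d1 q1 d2 q2 x y (m-1)
      rw [show m - 1 + 1 = m by omega] at hid
      have hKey := lemKey d1 q1 d2 q2 (Flux d1 q1 x m) (Flux d2 q2 y m)
        (x m) (y m) (Flux d1 q1 x m * y (m-1) - Flux d2 q2 y m * x (m-1))
        hd1 hq1 hd2 hdle hqle hne (hx m (by omega) le_rfl) (hy m (by omega) le_rfl)
        hs.1 hs.2 hid
      have hA0 : Flux d1 q1 x m * y (m-1) - Flux d2 q2 y m * x (m-1) = 0 :=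
        le_antisymm hWm1le (hKey.2.1 (le_of_eq hWm0.symm))
      exact hKey.2.2 hA0 (le_of_eq hWm0.symm)
lemma seg3_final (d1 q1 d2 q2 r : ℝ) (m : ℕ) (x y : ℕ → ℝ)
    (hd1 : 0 < d1) (hq1 : 0 < q1) (hd2 : 0 < d2) (hq2 : 0 < q2) (hm : 2 ≤ m)
    (hx : ∀ k, 1 ≤ k → k ≤ m → 0 < x k) (hy : ∀ k, 1 ≤ k → k ≤ m → 0 < y k)
    (hxeq : ∀ k, 2 ≤ k → k ≤ m - 1 →
      Flux d1 q1 x k - Flux d1 q1 x (k+1) + x k * (r - x k - y k) = 0)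
    (hx1 : -Flux d1 q1 x 2 + x 1 * (r - x 1 - y 1) = 0)
    (hyeq : ∀ k, 2 ≤ k → k ≤ m - 1 →
      Flux d2 q2 y k - Flux d2 q2 y (k+1) + y k * (r - y k - x k) = 0)
    (hy1 : -Flux d2 q2 y 2 + y 1 * (r - y 1 - x 1) = 0)
    (hFm : Flux d1 q1 x m = 0) (hGm : Flux d2 q2 y m = 0)
    (hphi : r - x m - y m = 0) : False := by
  -- x (m-1) > x m and y (m-1) > y m
  have hxm1 : x m < x (m-1) := by
    have h : d1 * x (m-1) - (d1 + q1) * x m = 0 := by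
      have := hFm
      simp only [Flux] at this
      exact this
    nlinarith [hx m (by omega) le_rfl]
  have hym1 : y m < y (m-1) := by
    have h : d2 * y (m-1) - (d2 + q2) * y m = 0 := by
      have := hGm
      simp only [Flux] at this
      exact this
    nlinarith [hy m (by omega) le_rfl]
  have hphim1 : r - x (m-1) - y (m-1) < 0 := by linarith
  rcases eq_or_lt_of_le hm with hm2 | hm3
  · -- m = 2 : then m - 1 = 1 and patch 1 gives contradiction directly
    have h1 : -Flux d1 q1 x 2 + x 1 * (r - x 1 - y 1) = 0 := hx1
    have hF2 : Flux d1 q1 x 2 = 0 := by rw [hm2]; exact hFm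
    have hx1pos : 0 < x 1 := hx 1 le_rfl (by omega)
    have hphi1 : r - x 1 - y 1 < 0 := by
      have : m - 1 = 1 := by omega
      rw [this] at hphim1
      exact hphim1
    nlinarith
  · -- m ≥ 3 : downward propagation
    have prop : ∀ j, ∀ k, k + j = m - 1 → 2 ≤ k →
        (0 < Flux d1 q1 x k ∧ 0 < Flux d2 q2 y k ∧ r - x k - y k < 0) := by
      intro j
      induction j with
      | zero =>
        intro k hk h2
        have hkm : k = m - 1 := by omega
        subst hkm
        refine ⟨?_, ?_, hphim1⟩
        · have heq := hxeq (m-1) (by omega) (by omega)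
          rw [show m - 1 + 1 = m by omega, hFm] at heq
          nlinarith [hx (m-1) (by omega) (by omega)]
        · have heq := hyeq (m-1) (by omega) (by omega)
          rw [show m - 1 + 1 = m by omega, hGm] at heq
          nlinarith [hy (m-1) (by omega) (by omega)]
      | succ j ih =>
        intro k hk h2
        obtain ⟨hF1, hG1, hphi1⟩ := ih (k+1) (by omega) (by omega)
        have hxk : x (k+1) < x k := by
          have h := hF1
          simp only [Flux, Nat.add_sub_cancel] at h
          nlinarith [hx (k+1) (by omega) (by omega)]
        have hyk : y (k+1) < y k := by
          have h := hG1
          simp only [Flux, Nat.add_sub_cancel] at h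
          nlinarith [hy (k+1) (by omega) (by omega)]
        have hphik : r - x k - y k < 0 := by linarith
        refine ⟨?_, ?_, hphik⟩
        · have heq := hxeq k h2 (by omega)
          nlinarith [hx k (by omega) (by omega)]
        · have heq := hyeq k h2 (by omega)
          nlinarith [hy k (by omega) (by omega)]
    obtain ⟨hF2, hG2, hphi2⟩ := prop (m - 3) 2 (by omega) le_rfl
    have hx12 : x 2 < x 1 := by
      have h := hF2
      simp only [Flux] at h
      norm_num at h
      nlinarith [hx 2 (by omega) (by omega)]
    have hy12 : y 2 < y 1 := by
      have h := hG2
      simp only [Flux] at h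
      norm_num at h
      nlinarith [hy 2 (by omega) (by omega)]
    have hphi1 : r - x 1 - y 1 < 0 := by linarith
    have hprod : x 1 * (r - x 1 - y 1) < 0 :=
      mul_neg_of_pos_of_neg (hx 1 (by omega) (by omega)) hphi1
    linarith
/-- **Lemma 3.3(iv)**. -/
theorem stmt_6
    (m1 m2 m3 : ℕ) (d1 q1 d2 q2 r : ℝ)
    (hm1 : 1 ≤ m1) (hm12 : m1 ≤ m2) (hm3 : 2 ≤ m3)
    (hd1 : 0 < d1) (hq1 : 0 < q1) (hr : 0 < r)
    (hS1 : S1mem d1 q1 d2 q2)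
    (u v : ℕ → ℕ → ℝ)
    (heq : YPosEquilibrium m1 m2 m3 d1 q1 d2 q2 r u v) :
    ¬ ∃ l1 l2 lstar : ℕ, l1 ≤ m1 ∧ l2 ≤ m2 ∧ 1 ≤ lstar ∧ lstar ≤ m3 ∧
      (∀ k, 1 ≤ k → k ≤ l1 →
        Yf m1 m2 m3 d1 q1 u 1 k ≤ 0 ∧ Yf m1 m2 m3 d2 q2 v 1 k ≤ 0) ∧
      (∀ k, 1 ≤ k → k ≤ l2 →
        Yf m1 m2 m3 d1 q1 u 2 k ≤ 0 ∧ Yf m1 m2 m3 d2 q2 v 2 k ≤ 0) ∧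
      (∀ k, lstar + 1 ≤ k → k ≤ m3 →
        Yf m1 m2 m3 d1 q1 u 3 k ≤ 0 ∧ Yf m1 m2 m3 d2 q2 v 3 k ≤ 0) ∧
      Yf m1 m2 m3 d1 q1 u 3 lstar ≤ 0 ∧
      Yf m1 m2 m3 d2 q2 v 1 (l1 + 1) ≤ 0 ∧
      Yf m1 m2 m3 d2 q2 v 2 (l2 + 1) ≤ 0 ∧
      0 ≤ Yf m1 m2 m3 d2 q2 v 3 lstar ∧
      0 ≤ Yf m1 m2 m3 d1 q1 u 1 (l1 + 1) ∧
      0 ≤ Yf m1 m2 m3 d1 q1 u 2 (l2 + 1) := by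
  rintro ⟨l1, l2, ls, hl1m, hl2m, hls1, hlsm, H1, H2, H3,
    hf3ls, hg1p, hg2p, hg3ls, hf1p, hf2p⟩
  obtain ⟨hPu, hPv, hEu, hEv⟩ := heq
  obtain ⟨hu10, hu20, hubi, hu3i, hube, hu31, huJ⟩ := hEu
  obtain ⟨hv10, hv20, hvbi, hv3i, hvbe, hv31, hvJ⟩ := hEv
  obtain ⟨hd2, hdle, hq2, hq2le, hne0⟩ := hS1
  have hseg1 : seg m1 m2 m3 1 = m1 := rfl
  have hseg2 : seg m1 m2 m3 2 = m2 := rfl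
  have hseg3 : seg m1 m2 m3 3 = m3 := rfl
  have hqle : d1 * q2 ≤ d2 * q1 := by
    rw [div_mul_eq_mul_div, le_div_iff₀ hd1] at hq2le
    linarith
  have hne : ¬(d2 = d1 ∧ q2 = q1) := by
    rintro ⟨h1, h2⟩
    exact hne0 (by rw [h1, h2])
  -- positivity
  have hu3p : ∀ k, 1 ≤ k → k ≤ m3 → 0 < u 3 k := fun k h1 h2 =>
    hPu 3 k (by tauto) h1 (by rw [hseg3]; exact h2)
  have hv3p : ∀ k, 1 ≤ k → k ≤ m3 → 0 < v 3 k := fun k h1 h2 =>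
    hPv 3 k (by tauto) h1 (by rw [hseg3]; exact h2)
  have hu1p : ∀ k, k ≤ m1 → 0 < u 1 k := by
    intro k hk
    rcases Nat.eq_zero_or_pos k with h0 | h0
    · rw [h0, hu10]; exact hu3p m3 (by omega) le_rfl
    · exact hPu 1 k (by tauto) h0 (by rw [hseg1]; exact hk)
  have hv1p : ∀ k, k ≤ m1 → 0 < v 1 k := by
    intro k hk
    rcases Nat.eq_zero_or_pos k with h0 | h0
    · rw [h0, hv10]; exact hv3p m3 (by omega) le_rfl
    · exact hPv 1 k (by tauto) h0 (by rw [hseg1]; exact hk)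
  have hu2p : ∀ k, k ≤ m2 → 0 < u 2 k := by
    intro k hk
    rcases Nat.eq_zero_or_pos k with h0 | h0
    · rw [h0, hu20]; exact hu3p m3 (by omega) le_rfl
    · exact hPu 2 k (by tauto) h0 (by rw [hseg2]; exact hk)
  have hv2p : ∀ k, k ≤ m2 → 0 < v 2 k := by
    intro k hk
    rcases Nat.eq_zero_or_pos k with h0 | h0
    · rw [h0, hv20]; exact hv3p m3 (by omega) le_rfl
    · exact hPv 2 k (by tauto) h0 (by rw [hseg2]; exact hk)
  -- flux-form equations, segment 3
  have eU3i : ∀ k, 2 ≤ k → k ≤ m3 - 1 →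
      Flux d1 q1 (u 3) k - Flux d1 q1 (u 3) (k+1) + u 3 k * (r - u 3 k - v 3 k) = 0 := by
    intro k h2 h1
    have h := hu3i k h2 (by omega)
    simp only [Flux, Nat.add_sub_cancel]
    linarith
  have eV3i : ∀ k, 2 ≤ k → k ≤ m3 - 1 →
      Flux d2 q2 (v 3) k - Flux d2 q2 (v 3) (k+1) + v 3 k * (r - v 3 k - u 3 k) = 0 := by
    intro k h2 h1
    have h := hv3i k h2 (by omega)
    simp only [Flux, Nat.add_sub_cancel]
    linarith
  have eU31 : -Flux d1 q1 (u 3) 2 + u 3 1 * (r - u 3 1 - v 3 1) = 0 := by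
    have h := hu31
    simp only [Flux, show (2:ℕ) - 1 = 1 from rfl]
    linarith
  have eV31 : -Flux d2 q2 (v 3) 2 + v 3 1 * (r - v 3 1 - u 3 1) = 0 := by
    have h := hv31
    simp only [Flux, show (2:ℕ) - 1 = 1 from rfl]
    linarith
  have eU3J : Flux d1 q1 (u 3) m3 - Flux d1 q1 (u 1) 1 - Flux d1 q1 (u 2) 1
      + u 3 m3 * (r - u 3 m3 - v 3 m3) = 0 := by
    have h := huJ
    simp only [Flux, show (1:ℕ) - 1 = 0 from rfl]
    rw [hu10, hu20]
    linarith
  have eV3J : Flux d2 q2 (v 3) m3 - Flux d2 q2 (v 1) 1 - Flux d2 q2 (v 2) 1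
      + v 3 m3 * (r - v 3 m3 - u 3 m3) = 0 := by
    have h := hvJ
    simp only [Flux, show (1:ℕ) - 1 = 0 from rfl]
    rw [hv10, hv20]
    linarith
  -- flux-form equations, branches
  have eU1i : ∀ k, 1 ≤ k → k ≤ m1 - 1 →
      Flux d1 q1 (u 1) k - Flux d1 q1 (u 1) (k+1) + u 1 k * (r - u 1 k - v 1 k) = 0 := by
    intro k h1 h2
    have h := hubi 1 (Or.inl rfl) k h1 (by rw [hseg1]; omega)
    simp only [Flux, Nat.add_sub_cancel]
    linarith
  have eV1i : ∀ k, 1 ≤ k → k ≤ m1 - 1 →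
      Flux d2 q2 (v 1) k - Flux d2 q2 (v 1) (k+1) + v 1 k * (r - v 1 k - u 1 k) = 0 := by
    intro k h1 h2
    have h := hvbi 1 (Or.inl rfl) k h1 (by rw [hseg1]; omega)
    simp only [Flux, Nat.add_sub_cancel]
    linarith
  have eU2i : ∀ k, 1 ≤ k → k ≤ m2 - 1 →
      Flux d1 q1 (u 2) k - Flux d1 q1 (u 2) (k+1) + u 2 k * (r - u 2 k - v 2 k) = 0 := by
    intro k h1 h2
    have h := hubi 2 (Or.inr rfl) k h1 (by rw [hseg2]; omega)
    simp only [Flux, Nat.add_sub_cancel]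
    linarith
  have eV2i : ∀ k, 1 ≤ k → k ≤ m2 - 1 →
      Flux d2 q2 (v 2) k - Flux d2 q2 (v 2) (k+1) + v 2 k * (r - v 2 k - u 2 k) = 0 := by
    intro k h1 h2
    have h := hvbi 2 (Or.inr rfl) k h1 (by rw [hseg2]; omega)
    simp only [Flux, Nat.add_sub_cancel]
    linarith
  have eU1e : Flux d1 q1 (u 1) m1 + u 1 m1 * (r - u 1 m1 - v 1 m1) = 0 := by
    have h := hube 1 (Or.inl rfl)
    rw [hseg1] at h
    simp only [Flux]
    linarith
  have eV1e : Flux d2 q2 (v 1) m1 + v 1 m1 * (r - v 1 m1 - u 1 m1) = 0 := by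
    have h := hvbe 1 (Or.inl rfl)
    rw [hseg1] at h
    simp only [Flux]
    linarith
  have eU2e : Flux d1 q1 (u 2) m2 + u 2 m2 * (r - u 2 m2 - v 2 m2) = 0 := by
    have h := hube 2 (Or.inr rfl)
    rw [hseg2] at h
    simp only [Flux]
    linarith
  have eV2e : Flux d2 q2 (v 2) m2 + v 2 m2 * (r - v 2 m2 - u 2 m2) = 0 := by
    have h := hvbe 2 (Or.inr rfl)
    rw [hseg2] at h
    simp only [Flux]
    linarith
  -- Yf-to-Flux conversions
  have cYf3 : ∀ (d q : ℝ) (w : ℕ → ℕ → ℝ) k, 2 ≤ k → k ≤ m3 →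
      Yf m1 m2 m3 d q w 3 k = Flux d q (w 3) k := by
    intro d q w k h2 hk
    unfold Yf
    rw [if_pos (rfl : (3:ℕ) = 3), if_pos (⟨h2, hk⟩ : 2 ≤ k ∧ k ≤ m3)]
    rfl
  have cYf1 : ∀ (d q : ℝ) (w : ℕ → ℕ → ℝ) k, 1 ≤ k → k ≤ m1 →
      Yf m1 m2 m3 d q w 1 k = Flux d q (w 1) k := by
    intro d q w k h1 hk
    unfold Yf
    rw [if_neg (by decide : ¬((1:ℕ) = 3)),
      if_pos (⟨h1, by rw [hseg1]; exact hk⟩ : 1 ≤ k ∧ k ≤ seg m1 m2 m3 1)]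
    rfl
  have cYf2 : ∀ (d q : ℝ) (w : ℕ → ℕ → ℝ) k, 1 ≤ k → k ≤ m2 →
      Yf m1 m2 m3 d q w 2 k = Flux d q (w 2) k := by
    intro d q w k h1 hk
    unfold Yf
    rw [if_neg (by decide : ¬((2:ℕ) = 3)),
      if_pos (⟨h1, by rw [hseg2]; exact hk⟩ : 1 ≤ k ∧ k ≤ seg m1 m2 m3 2)]
    rfl
  -- sign hypotheses in Flux form
  have sgn3 : ∀ k, ls + 1 ≤ k → k ≤ m3 →
      Flux d1 q1 (u 3) k ≤ 0 ∧ Flux d2 q2 (v 3) k ≤ 0 := by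
    intro k hk1 hk2
    have h := H3 k hk1 hk2
    rwa [cYf3 d1 q1 u k (by omega) hk2, cYf3 d2 q2 v k (by omega) hk2] at h
  have pf3 : 2 ≤ ls → Flux d1 q1 (u 3) ls ≤ 0 := by
    intro h2; rwa [cYf3 d1 q1 u ls h2 hlsm] at hf3ls
  have pg3 : 2 ≤ ls → 0 ≤ Flux d2 q2 (v 3) ls := by
    intro h2; rwa [cYf3 d2 q2 v ls h2 hlsm] at hg3ls
  have sgn1 : ∀ k, 1 ≤ k → k ≤ l1 →
      Flux d1 q1 (u 1) k ≤ 0 ∧ Flux d2 q2 (v 1) k ≤ 0 := by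
    intro k h1 h2
    have h := H1 k h1 h2
    rwa [cYf1 d1 q1 u k h1 (by omega), cYf1 d2 q2 v k h1 (by omega)] at h
  have sgn2 : ∀ k, 1 ≤ k → k ≤ l2 →
      Flux d1 q1 (u 2) k ≤ 0 ∧ Flux d2 q2 (v 2) k ≤ 0 := by
    intro k h1 h2
    have h := H2 k h1 h2
    rwa [cYf2 d1 q1 u k h1 (by omega), cYf2 d2 q2 v k h1 (by omega)] at h
  have pfb1 : l1 + 1 ≤ m1 → 0 ≤ Flux d1 q1 (u 1) (l1+1) := by
    intro h; rwa [cYf1 d1 q1 u (l1+1) (by omega) h] at hf1p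
  have pgb1 : l1 + 1 ≤ m1 → Flux d2 q2 (v 1) (l1+1) ≤ 0 := by
    intro h; rwa [cYf1 d2 q2 v (l1+1) (by omega) h] at hg1p
  have pfb2 : l2 + 1 ≤ m2 → 0 ≤ Flux d1 q1 (u 2) (l2+1) := by
    intro h; rwa [cYf2 d1 q1 u (l2+1) (by omega) h] at hf2p
  have pgb2 : l2 + 1 ≤ m2 → Flux d2 q2 (v 2) (l2+1) ≤ 0 := by
    intro h; rwa [cYf2 d2 q2 v (l2+1) (by omega) h] at hg2p
  -- main machinery
  have hB1 := branch_chain d1 q1 d2 q2 r m1 l1 (u 1) (v 1) hd1 hq1 hd2 hdle hqle hne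
    hm1 hl1m hu1p hv1p eU1i eU1e eV1i eV1e sgn1 pfb1 pgb1
  have hB2 := branch_chain d1 q1 d2 q2 r m2 l2 (u 2) (v 2) hd1 hq1 hd2 hdle hqle hne
    (by omega) hl2m hu2p hv2p eU2i eU2e eV2i eV2e sgn2 pfb2 pgb2
  have hS3 := seg3_chain d1 q1 d2 q2 r m3 ls (u 3) (v 3) hd1 hq1 hd2 hdle hqle hne
    hm3 hls1 hlsm hu3p hv3p eU3i eU31 eV3i eV31 sgn3 pf3 pg3
  -- junction identity
  have hWJ : Flux d1 q1 (u 3) m3 * v 3 m3 - Flux d2 q2 (v 3) m3 * u 3 m3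
      = (Flux d1 q1 (u 1) 1 * v 1 0 - Flux d2 q2 (v 1) 1 * u 1 0)
        + (Flux d1 q1 (u 2) 1 * v 2 0 - Flux d2 q2 (v 2) 1 * u 2 0) := by
    have h1 := eU3J
    have h2 := eV3J
    rw [hu10, hu20, hv10, hv20]
    linear_combination (v 3 m3) * h1 - (u 3 m3) * h2
  -- squeeze at the junction
  have hWm_le := hS3.1
  have hA1nn := hB1.1
  have hA2nn := hB2.1
  have hWm0 : Flux d1 q1 (u 3) m3 * v 3 m3 - Flux d2 q2 (v 3) m3 * u 3 m3 = 0 := by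
    linarith
  have hA10 : Flux d1 q1 (u 1) 1 * v 1 0 - Flux d2 q2 (v 1) 1 * u 1 0 = 0 := by
    linarith
  have hA20 : Flux d1 q1 (u 2) 1 * v 2 0 - Flux d2 q2 (v 2) 1 * u 2 0 = 0 := by
    linarith
  obtain ⟨hF3m, hG3m⟩ := hS3.2 hWm0
  obtain ⟨hFb1, hGb1⟩ := hB1.2 hA10
  obtain ⟨hFb2, hGb2⟩ := hB2.2 hA20
  -- the junction patch then satisfies r = u + v
  have hphiJ : r - u 3 m3 - v 3 m3 = 0 := by
    have h := eU3J
    rw [hF3m, hFb1, hFb2] at h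
    have h' : u 3 m3 * (r - u 3 m3 - v 3 m3) = 0 := by linarith
    rcases mul_eq_zero.mp h' with h'' | h''
    · exact absurd h'' (hu3p m3 (by omega) le_rfl).ne'
    · exact h''
  exact seg3_final d1 q1 d2 q2 r m3 (u 3) (v 3) hd1 hq1 hd2 hq2 hm3 hu3p hv3p
    eU3i eU31 eV3i eV31 hF3m hG3m hphiJ
end
end

section
/- (Lemma 3.4(ii)) Assume (d2,q2) ∈ S1 and let (u,v) be a positive equilibrium. Then there do not exist integers l_1^*, l̃_2^*, l_2^*, l_* with 1 ≤ l_1^* ≤ m1, 1 ≤ l̃_2^* ≤ l_2^* ≤ m2 and 1 ≤ l_* ≤ m3 such that: f^1_k ≤ 0 and g^1_k ≤ 0 for all 1 ≤ k ≤ l_1^*; f^2_k ≥ 0 and g^2_k ≥ 0 for all 1 ≤ k ≤ l̃_2^*; f^2_k ≤ 0 and g^2_k ≤ 0 for all l̃_2^* < k ≤ l_2^*; f^3_k ≤ 0 and g^3_k ≤ 0 for all l_*+1 ≤ k ≤ m3; f^3_{l_*} ≤ 0, g^1_{l_1^*+1} ≤ 0, g^2_{l_2^*+1} ≤ 0; and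 g^3_{l_*} ≥ 0, f^1_{l_1^*+1} ≥ 0, f^2_{l_2^*+1} ≥ 0. -/
open Finset Filter

noncomputable section

/-- Auxiliary raw flux of a single-branch sequence. -/
def yflux (d q : ℝ) (w : ℕ → ℝ) (k : ℕ) : ℝ := d * w (k - 1) - (d + q) * w k

lemma yflux_succ (d q : ℝ) (w : ℕ → ℝ) (k : ℕ) :
    yflux d q w (k + 1) = d * w k - (d + q) * w (k + 1) := by
  simp [yflux]

/-- Downward induction from `m` to `1`. -/
lemma stmt8_down_ind (P : ℕ → Prop) (m : ℕ) (hm : P m)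
    (hstep : ∀ k, 1 ≤ k → k < m → P (k + 1) → P k) :
    ∀ k, 1 ≤ k → k ≤ m → P k := by
  have key : ∀ n k, k + n = m → 1 ≤ k → P k := by
    intro n
    induction n with
    | zero =>
      intro k hk _
      have : k = m := by omega
      exact this ▸ hm
    | succ n ih =>
      intro k hk hk1
      exact hstep k hk1 (by omega) (ih (k + 1) (by omega) (by omega))
  intro k hk1 hkm
  exact key (m - k) k (by omega) hk1

/-- Overcrowding lemma: on a top-capped branch, if both fluxes are nonnegative at
some index, the patch below is overcrowded. -/
lemma stmt8_overcrowd (d1 q1 d2 q2 r : ℝ) (hd1 : 0 < d1) (hq1 : 0 < q1)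
    (hd2 : 0 < d2) (hq2 : 0 < q2)
    (m : ℕ) (a b : ℕ → ℝ)
    (hpa : ∀ k, k ≤ m → 0 < a k) (hpb : ∀ k, k ≤ m → 0 < b k)
    (hrecA : ∀ k, 1 ≤ k → k + 1 ≤ m →
      yflux d1 q1 a (k + 1) = yflux d1 q1 a k + a k * (r - a k - b k))
    (hrecB : ∀ k, 1 ≤ k → k + 1 ≤ m →
      yflux d2 q2 b (k + 1) = yflux d2 q2 b k + b k * (r - a k - b k))
    (htopA : yflux d1 q1 a m + a m * (r - a m - b m) = 0)
    (htopB : yflux d2 q2 b m + b m * (r - a m - b m) = 0)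
    (j0 : ℕ) (hj1 : 1 ≤ j0) (hjm : j0 ≤ m)
    (hFa : 0 ≤ yflux d1 q1 a j0) (hGa : 0 ≤ yflux d2 q2 b j0) :
    r < a (j0 - 1) + b (j0 - 1) := by
  by_contra hcon
  push_neg at hcon
  have key : ∀ j, j0 ≤ j → j ≤ m →
      (0 ≤ yflux d1 q1 a j ∧ 0 ≤ yflux d2 q2 b j ∧ a (j - 1) + b (j - 1) ≤ r) := by
    intro j hj
    induction j, hj using Nat.le_induction with
    | base => exact fun _ => ⟨hFa, hGa, hcon⟩
    | succ j hj ih =>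
      intro hjm1
      obtain ⟨hA, hB, hab⟩ := ih (by omega)
      have hj1' : 1 ≤ j := le_trans hj1 hj
      have hajpos : 0 < a j := hpa j (by omega)
      have hbjpos : 0 < b j := hpb j (by omega)
      have haj : a j < a (j - 1) := by
        rw [yflux] at hA; nlinarith
      have hbj : b j < b (j - 1) := by
        rw [yflux] at hB; nlinarith
      have hs : 0 < r - a j - b j := by linarith
      have habj : a j + b j ≤ r := by linarith
      refine ⟨?_, ?_, by simpa using habj⟩
      · rw [hrecA j hj1' (by omega)]
        nlinarith [mul_pos hajpos hs]
      · rw [hrecB j hj1' (by omega)]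
        nlinarith [mul_pos hbjpos hs]
  obtain ⟨hA, hB, hab⟩ := key m (le_trans (le_refl j0) hjm) le_rfl
  have h1m : 1 ≤ m := le_trans hj1 hjm
  have hampos : 0 < a m := hpa m le_rfl
  have hbmpos : 0 < b m := hpb m le_rfl
  have ham : a m < a (m - 1) := by
    rw [yflux] at hA; nlinarith
  have hbm : b m < b (m - 1) := by
    rw [yflux] at hB; nlinarith
  have hs : 0 < r - a m - b m := by linarith
  nlinarith [mul_pos hampos hs]

/-- Descent lemma: if the top patch of a capped branch is overcrowded,
both fluxes are positive all the way down. -/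
lemma stmt8_descent (d1 q1 d2 q2 r : ℝ) (hd1 : 0 < d1) (hq1 : 0 < q1)
    (hd2 : 0 < d2) (hq2 : 0 < q2)
    (m : ℕ) (hm : 1 ≤ m) (a b : ℕ → ℝ)
    (hpa : ∀ k, k ≤ m → 0 < a k) (hpb : ∀ k, k ≤ m → 0 < b k)
    (hrecA : ∀ k, 1 ≤ k → k + 1 ≤ m →
      yflux d1 q1 a (k + 1) = yflux d1 q1 a k + a k * (r - a k - b k))
    (hrecB : ∀ k, 1 ≤ k → k + 1 ≤ m →
      yflux d2 q2 b (k + 1) = yflux d2 q2 b k + b k * (r - a k - b k))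
    (htopA : yflux d1 q1 a m + a m * (r - a m - b m) = 0)
    (htopB : yflux d2 q2 b m + b m * (r - a m - b m) = 0)
    (hcrowd : r < a m + b m) :
    0 < yflux d1 q1 a 1 := by
  have main : ∀ k, 1 ≤ k → k ≤ m → 0 < yflux d1 q1 a k ∧ 0 < yflux d2 q2 b k := by
    apply stmt8_down_ind
    · have hs : r - a m - b m < 0 := by linarith
      have hampos : 0 < a m := hpa m le_rfl
      have hbmpos : 0 < b m := hpb m le_rfl
      constructor
      · nlinarith [mul_neg_of_pos_of_neg hampos hs]
      · nlinarith [mul_neg_of_pos_of_neg hbmpos hs]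
    · intro k hk1 hkm hP
      obtain ⟨hA, hB⟩ := hP
      have hcr := stmt8_overcrowd d1 q1 d2 q2 r hd1 hq1 hd2 hq2 m a b hpa hpb
        hrecA hrecB htopA htopB (k + 1) (by omega) (by omega) hA.le hB.le
      simp only [Nat.add_sub_cancel] at hcr
      have hs : r - a k - b k < 0 := by linarith
      have hakpos : 0 < a k := hpa k (by omega)
      have hbkpos : 0 < b k := hpb k (by omega)
      have e1 := hrecA k hk1 (by omega)
      have e2 := hrecB k hk1 (by omega)
      constructor
      · nlinarith [mul_neg_of_pos_of_neg hakpos hs]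
      · nlinarith [mul_neg_of_pos_of_neg hbkpos hs]
  exact (main 1 le_rfl hm).1

lemma stmt8_cross (d D x0 x1 y0 y1 : ℝ) (hd : 0 ≤ d) (hW : x0 * y1 ≤ y0 * x1) :
    (d * x0 - D * x1) * y1 ≤ (d * y0 - D * y1) * x1 := by nlinarith

lemma stmt8_interface (F1 F2 p1 p2 s1 s2 : ℝ) (hp2 : 0 ≤ p2)
    (hcross : F1 * p2 ≤ F2 * p1)
    (hs : p1 * p2 * s1 ≤ p1 * p2 * s2) (htop : F1 + p1 * s1 = 0) :
    0 ≤ (F2 + p2 * s2) * p1 := by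
  have h2 : (F1 + p1 * s1) * p2 = 0 := by rw [htop]; ring
  nlinarith [h2, hcross, hs]

/-- Branch-comparison ordering: shorter branch with nonpositive initial fluxes dominates
the branch with nonnegative initial fluxes, patchwise. -/
lemma stmt8_ordering (d1 q1 d2 q2 r : ℝ) (hd1 : 0 < d1) (hq1 : 0 < q1)
    (hd2 : 0 < d2) (hq2 : 0 < q2)
    (m1 m2 : ℕ) (hm12 : m1 ≤ m2)
    (a1 b1 a2 b2 : ℕ → ℝ)
    (hpa1 : ∀ k, k ≤ m1 → 0 < a1 k) (hpb1 : ∀ k, k ≤ m1 → 0 < b1 k)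
    (hpa2 : ∀ k, k ≤ m2 → 0 < a2 k) (hpb2 : ∀ k, k ≤ m2 → 0 < b2 k)
    (hrecA1 : ∀ k, 1 ≤ k → k + 1 ≤ m1 →
      yflux d1 q1 a1 (k + 1) = yflux d1 q1 a1 k + a1 k * (r - a1 k - b1 k))
    (hrecB1 : ∀ k, 1 ≤ k → k + 1 ≤ m1 →
      yflux d2 q2 b1 (k + 1) = yflux d2 q2 b1 k + b1 k * (r - a1 k - b1 k))
    (hrecA2 : ∀ k, 1 ≤ k → k + 1 ≤ m2 →
      yflux d1 q1 a2 (k + 1) = yflux d1 q1 a2 k + a2 k * (r - a2 k - b2 k))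
    (hrecB2 : ∀ k, 1 ≤ k → k + 1 ≤ m2 →
      yflux d2 q2 b2 (k + 1) = yflux d2 q2 b2 k + b2 k * (r - a2 k - b2 k))
    (hanchA : a1 0 = a2 0) (hanchB : b1 0 = b2 0)
    (hF11 : yflux d1 q1 a1 1 ≤ 0) (hG11 : yflux d2 q2 b1 1 ≤ 0)
    (hF21 : 0 ≤ yflux d1 q1 a2 1) (hG21 : 0 ≤ yflux d2 q2 b2 1) :
    ∀ k, 1 ≤ k → k ≤ m1 →
      a2 k ≤ a1 k ∧ b2 k ≤ b1 k ∧
      a1 (k - 1) * a2 k ≤ a2 (k - 1) * a1 k ∧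
      b1 (k - 1) * b2 k ≤ b2 (k - 1) * b1 k := by
  intro k hk1
  induction k, hk1 using Nat.le_induction with
  | base =>
    intro h1m
    have hu : a2 1 ≤ a1 1 := by
      have h1 := hF11; have h2 := hF21
      rw [yflux] at h1 h2
      simp only [Nat.sub_self] at h1 h2
      rw [hanchA] at h1
      nlinarith
    have hv : b2 1 ≤ b1 1 := by
      have h1 := hG11; have h2 := hG21
      rw [yflux] at h1 h2
      simp only [Nat.sub_self] at h1 h2
      rw [hanchB] at h1
      nlinarith
    have ha0 : 0 < a1 0 := hpa1 0 (by omega)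
    have hb0 : 0 < b1 0 := hpb1 0 (by omega)
    refine ⟨hu, hv, ?_, ?_⟩
    · simp only [Nat.sub_self]
      rw [← hanchA]
      nlinarith
    · simp only [Nat.sub_self]
      rw [← hanchB]
      nlinarith
  | succ k hk1 ih =>
    intro hkm
    obtain ⟨hu, hv, hWu, hWv⟩ := ih (by omega)
    have hpa1k : 0 < a1 k := hpa1 k (by omega)
    have hpb1k : 0 < b1 k := hpb1 k (by omega)
    have hpa2k : 0 < a2 k := hpa2 k (by omega)
    have hpb2k : 0 < b2 k := hpb2 k (by omega)
    have hpa1k1 : 0 < a1 (k + 1) := hpa1 (k + 1) (by omega)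
    have hpb1k1 : 0 < b1 (k + 1) := hpb1 (k + 1) (by omega)
    have hpa2k1 : 0 < a2 (k + 1) := hpa2 (k + 1) (by omega)
    have hpb2k1 : 0 < b2 (k + 1) := hpb2 (k + 1) (by omega)
    -- cross flux inequality at k
    have hcrossA : yflux d1 q1 a1 k * a2 k ≤ yflux d1 q1 a2 k * a1 k := by
      simp only [yflux]
      nlinarith [mul_nonneg hd1.le (sub_nonneg.mpr hWu)]
    have hcrossB : yflux d2 q2 b1 k * b2 k ≤ yflux d2 q2 b2 k * b1 k := by
      simp only [yflux]
      nlinarith [mul_nonneg hd2.le (sub_nonneg.mpr hWv)]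
    -- s-comparison
    have hscmp : r - a1 k - b1 k ≤ r - a2 k - b2 k := by linarith
    have hD1 : (0:ℝ) < d1 + q1 := by linarith
    have hD2 : (0:ℝ) < d2 + q2 := by linarith
    -- cross flux inequality at k+1
    have hmulA : a1 k * a2 k * (r - a1 k - b1 k) ≤ a1 k * a2 k * (r - a2 k - b2 k) :=
      mul_le_mul_of_nonneg_left hscmp (mul_pos hpa1k hpa2k).le
    have hmulB : b1 k * b2 k * (r - a1 k - b1 k) ≤ b1 k * b2 k * (r - a2 k - b2 k) :=
      mul_le_mul_of_nonneg_left hscmp (mul_pos hpb1k hpb2k).le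
    have hcrossA1 : yflux d1 q1 a1 (k + 1) * a2 k ≤ yflux d1 q1 a2 (k + 1) * a1 k := by
      rw [hrecA1 k (by omega) (by omega), hrecA2 k (by omega) (by omega)]
      ring_nf
      ring_nf at hcrossA hmulA
      linarith
    have hcrossB1 : yflux d2 q2 b1 (k + 1) * b2 k ≤ yflux d2 q2 b2 (k + 1) * b1 k := by
      rw [hrecB1 k (by omega) (by omega), hrecB2 k (by omega) (by omega)]
      ring_nf
      ring_nf at hcrossB hmulB
      linarith
    -- Wronskian at k+1
    have hWu1 : a1 k * a2 (k + 1) ≤ a2 k * a1 (k + 1) := by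
      rw [yflux_succ, yflux_succ] at hcrossA1
      refine le_of_mul_le_mul_left ?_ hD1
      ring_nf
      ring_nf at hcrossA1
      linarith
    have hWv1 : b1 k * b2 (k + 1) ≤ b2 k * b1 (k + 1) := by
      rw [yflux_succ, yflux_succ] at hcrossB1
      refine le_of_mul_le_mul_left ?_ hD2
      ring_nf
      ring_nf at hcrossB1
      linarith
    have hu1 : a2 (k + 1) ≤ a1 (k + 1) := by
      have h1 : a2 k * a2 (k + 1) ≤ a2 k * a1 (k + 1) :=
        le_trans (mul_le_mul_of_nonneg_right hu hpa2k1.le) hWu1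
      exact le_of_mul_le_mul_left h1 hpa2k
    have hv1 : b2 (k + 1) ≤ b1 (k + 1) := by
      have h1 : b2 k * b2 (k + 1) ≤ b2 k * b1 (k + 1) :=
        le_trans (mul_le_mul_of_nonneg_right hv hpb2k1.le) hWv1
      exact le_of_mul_le_mul_left h1 hpb2k
    refine ⟨hu1, hv1, ?_, ?_⟩
    · simpa only [Nat.add_sub_cancel] using hWu1
    · simpa only [Nat.add_sub_cancel] using hWv1

/-- Equality cascade for branches of equal length. -/
lemma stmt8_eqcascade (d1 q1 d2 q2 r : ℝ) (hd1 : 0 < d1) (hq1 : 0 < q1)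
    (hd2 : 0 < d2) (hq2 : 0 < q2)
    (m : ℕ) (hm : 1 ≤ m)
    (a1 b1 a2 b2 : ℕ → ℝ)
    (hpa1 : ∀ k, k ≤ m → 0 < a1 k) (hpb1 : ∀ k, k ≤ m → 0 < b1 k)
    (hpa2 : ∀ k, k ≤ m → 0 < a2 k) (hpb2 : ∀ k, k ≤ m → 0 < b2 k)
    (hrecA1 : ∀ k, 1 ≤ k → k + 1 ≤ m →
      yflux d1 q1 a1 (k + 1) = yflux d1 q1 a1 k + a1 k * (r - a1 k - b1 k))
    (hrecB1 : ∀ k, 1 ≤ k → k + 1 ≤ m →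
      yflux d2 q2 b1 (k + 1) = yflux d2 q2 b1 k + b1 k * (r - a1 k - b1 k))
    (hrecA2 : ∀ k, 1 ≤ k → k + 1 ≤ m →
      yflux d1 q1 a2 (k + 1) = yflux d1 q1 a2 k + a2 k * (r - a2 k - b2 k))
    (hrecB2 : ∀ k, 1 ≤ k → k + 1 ≤ m →
      yflux d2 q2 b2 (k + 1) = yflux d2 q2 b2 k + b2 k * (r - a2 k - b2 k))
    (htopA1 : yflux d1 q1 a1 m + a1 m * (r - a1 m - b1 m) = 0)
    (htopB1 : yflux d2 q2 b1 m + b1 m * (r - a1 m - b1 m) = 0)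
    (htopA2 : yflux d1 q1 a2 m + a2 m * (r - a2 m - b2 m) = 0)
    (htopB2 : yflux d2 q2 b2 m + b2 m * (r - a2 m - b2 m) = 0)
    (hum : a2 m ≤ a1 m) (hvm : b2 m ≤ b1 m)
    (hWum : a1 (m - 1) * a2 m ≤ a2 (m - 1) * a1 m) :
    yflux d1 q1 a1 1 = yflux d1 q1 a2 1 := by
  have hpa1m : 0 < a1 m := hpa1 m le_rfl
  have hpa2m : 0 < a2 m := hpa2 m le_rfl
  have hpb1m : 0 < b1 m := hpb1 m le_rfl
  have hpb2m : 0 < b2 m := hpb2 m le_rfl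
  -- cross flux inequality at m
  have hcrossA : yflux d1 q1 a1 m * a2 m ≤ yflux d1 q1 a2 m * a1 m := by
    simp only [yflux]
    nlinarith [mul_nonneg hd1.le (sub_nonneg.mpr hWum)]
  -- equality at the top
  have hFA1 : yflux d1 q1 a1 m = -(a1 m * (r - a1 m - b1 m)) := by linarith
  have hFA2 : yflux d1 q1 a2 m = -(a2 m * (r - a2 m - b2 m)) := by linarith
  rw [hFA1, hFA2] at hcrossA
  have hprod : a1 m * a2 m * ((a1 m - a2 m) + (b1 m - b2 m)) ≤ 0 := by nlinarith [hcrossA]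
  have hsle : (a1 m - a2 m) + (b1 m - b2 m) ≤ 0 := by
    nlinarith [mul_pos hpa1m hpa2m]
  have hueq : a1 m = a2 m := le_antisymm (by linarith) hum
  have hveq : b1 m = b2 m := le_antisymm (by linarith) hvm
  have P : ∀ k, 1 ≤ k → k ≤ m →
      (a1 k = a2 k ∧ b1 k = b2 k ∧
       yflux d1 q1 a1 k = yflux d1 q1 a2 k ∧ yflux d2 q2 b1 k = yflux d2 q2 b2 k) := by
    apply stmt8_down_ind
    · refine ⟨hueq, hveq, ?_, ?_⟩
      · rw [hueq, hveq] at htopA1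
        linarith
      · rw [hueq, hveq] at htopB1
        linarith
    · intro k hk1 hkm hP
      obtain ⟨hu1, hv1, hF1, hG1⟩ := hP
      have ha : a1 k = a2 k := by
        have h1 := hF1
        rw [yflux_succ, yflux_succ, hu1] at h1
        have h2 : d1 * a1 k = d1 * a2 k := by linarith
        exact mul_left_cancel₀ hd1.ne' h2
      have hb : b1 k = b2 k := by
        have h1 := hG1
        rw [yflux_succ, yflux_succ, hv1] at h1
        have h2 : d2 * b1 k = d2 * b2 k := by linarith
        exact mul_left_cancel₀ hd2.ne' h2
      have e1 := hrecA1 k hk1 (by omega)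
      have e2 := hrecA2 k hk1 (by omega)
      have e3 := hrecB1 k hk1 (by omega)
      have e4 := hrecB2 k hk1 (by omega)
      rw [ha, hb] at e1 e3
      refine ⟨ha, hb, by linarith, by linarith⟩
  exact (P 1 le_rfl hm).2.2.1

/-- **Lemma 3.4(ii)**. -/
theorem stmt_8
    (m1 m2 m3 : ℕ) (d1 q1 d2 q2 r : ℝ)
    (hm1 : 1 ≤ m1) (hm12 : m1 ≤ m2) (hm3 : 2 ≤ m3)
    (hd1 : 0 < d1) (hq1 : 0 < q1) (hr : 0 < r)
    (hS1 : S1mem d1 q1 d2 q2)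
    (u v : ℕ → ℕ → ℝ)
    (heq : YPosEquilibrium m1 m2 m3 d1 q1 d2 q2 r u v) :
    ¬ ∃ l1 tl2 l2 lstar : ℕ,
      1 ≤ l1 ∧ l1 ≤ m1 ∧ 1 ≤ tl2 ∧ tl2 ≤ l2 ∧ l2 ≤ m2 ∧ 1 ≤ lstar ∧ lstar ≤ m3 ∧
      (∀ k, 1 ≤ k → k ≤ l1 →
        Yf m1 m2 m3 d1 q1 u 1 k ≤ 0 ∧ Yf m1 m2 m3 d2 q2 v 1 k ≤ 0) ∧
      (∀ k, 1 ≤ k → k ≤ tl2 →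
        0 ≤ Yf m1 m2 m3 d1 q1 u 2 k ∧ 0 ≤ Yf m1 m2 m3 d2 q2 v 2 k) ∧
      (∀ k, tl2 < k → k ≤ l2 →
        Yf m1 m2 m3 d1 q1 u 2 k ≤ 0 ∧ Yf m1 m2 m3 d2 q2 v 2 k ≤ 0) ∧
      (∀ k, lstar + 1 ≤ k → k ≤ m3 →
        Yf m1 m2 m3 d1 q1 u 3 k ≤ 0 ∧ Yf m1 m2 m3 d2 q2 v 3 k ≤ 0) ∧
      Yf m1 m2 m3 d1 q1 u 3 lstar ≤ 0 ∧
      Yf m1 m2 m3 d2 q2 v 1 (l1 + 1) ≤ 0 ∧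
      Yf m1 m2 m3 d2 q2 v 2 (l2 + 1) ≤ 0 ∧
      0 ≤ Yf m1 m2 m3 d2 q2 v 3 lstar ∧
      0 ≤ Yf m1 m2 m3 d1 q1 u 1 (l1 + 1) ∧
      0 ≤ Yf m1 m2 m3 d1 q1 u 2 (l2 + 1) := by
  obtain ⟨hup, hvp, hequ, heqv⟩ := heq
  obtain ⟨hu10, hu20, huint, -, hutop, -, hujunc⟩ := hequ
  obtain ⟨hv10, hv20, hvint, -, hvtop, -, hvjunc⟩ := heqv
  obtain ⟨hd2', -, hq2', -, -⟩ := hS1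
  rintro ⟨l1, tl2, l2, lstar, hl11, hl1m, htl21, htl2l2, hl2m, hls1, hlsm,
    hseg1c, hheadc, hmidc, htailc, hf3l, hg1l, hg2l, hg3l, hf1l, hf2l⟩
  have hm2 : 1 ≤ m2 := le_trans hm1 hm12
  -- positivity of all patch values (including the junction anchor)
  have hposU : 0 < u 3 m3 := hup 3 m3 (by tauto) (by omega) (by simp [seg])
  have hposV : 0 < v 3 m3 := hvp 3 m3 (by tauto) (by omega) (by simp [seg])
  have hpa1 : ∀ k, k ≤ m1 → 0 < u 1 k := by
    intro k hk
    rcases Nat.eq_zero_or_pos k with rfl | h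
    · rw [hu10]; exact hposU
    · exact hup 1 k (by tauto) h (by simpa [seg] using hk)
  have hpb1 : ∀ k, k ≤ m1 → 0 < v 1 k := by
    intro k hk
    rcases Nat.eq_zero_or_pos k with rfl | h
    · rw [hv10]; exact hposV
    · exact hvp 1 k (by tauto) h (by simpa [seg] using hk)
  have hpa2 : ∀ k, k ≤ m2 → 0 < u 2 k := by
    intro k hk
    rcases Nat.eq_zero_or_pos k with rfl | h
    · rw [hu20]; exact hposU
    · exact hup 2 k (by tauto) h (by simpa [seg] using hk)
  have hpb2 : ∀ k, k ≤ m2 → 0 < v 2 k := by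
    intro k hk
    rcases Nat.eq_zero_or_pos k with rfl | h
    · rw [hv20]; exact hposV
    · exact hvp 2 k (by tauto) h (by simpa [seg] using hk)
  -- flux recursions on the two branches
  have hrecA1 : ∀ k, 1 ≤ k → k + 1 ≤ m1 →
      yflux d1 q1 (u 1) (k + 1) = yflux d1 q1 (u 1) k + u 1 k * (r - u 1 k - v 1 k) := by
    intro k hk hkm
    have h := huint 1 (Or.inl rfl) k hk (by simpa [seg] using hkm)
    simp only [yflux, Nat.add_sub_cancel]
    linear_combination -h
  have hrecB1 : ∀ k, 1 ≤ k → k + 1 ≤ m1 →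
      yflux d2 q2 (v 1) (k + 1) = yflux d2 q2 (v 1) k + v 1 k * (r - u 1 k - v 1 k) := by
    intro k hk hkm
    have h := hvint 1 (Or.inl rfl) k hk (by simpa [seg] using hkm)
    simp only [yflux, Nat.add_sub_cancel]
    linear_combination -h
  have hrecA2 : ∀ k, 1 ≤ k → k + 1 ≤ m2 →
      yflux d1 q1 (u 2) (k + 1) = yflux d1 q1 (u 2) k + u 2 k * (r - u 2 k - v 2 k) := by
    intro k hk hkm
    have h := huint 2 (Or.inr rfl) k hk (by simpa [seg] using hkm)
    simp only [yflux, Nat.add_sub_cancel]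
    linear_combination -h
  have hrecB2 : ∀ k, 1 ≤ k → k + 1 ≤ m2 →
      yflux d2 q2 (v 2) (k + 1) = yflux d2 q2 (v 2) k + v 2 k * (r - u 2 k - v 2 k) := by
    intro k hk hkm
    have h := hvint 2 (Or.inr rfl) k hk (by simpa [seg] using hkm)
    simp only [yflux, Nat.add_sub_cancel]
    linear_combination -h
  -- upstream boundary conditions
  have hsv1 : seg m1 m2 m3 1 = m1 := rfl
  have hsv2 : seg m1 m2 m3 2 = m2 := rfl
  have htopA1 : yflux d1 q1 (u 1) m1 + u 1 m1 * (r - u 1 m1 - v 1 m1) = 0 := by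
    have h := hutop 1 (Or.inl rfl)
    rw [hsv1] at h
    simp only [yflux]
    linear_combination h
  have htopB1 : yflux d2 q2 (v 1) m1 + v 1 m1 * (r - u 1 m1 - v 1 m1) = 0 := by
    have h := hvtop 1 (Or.inl rfl)
    rw [hsv1] at h
    simp only [yflux]
    linear_combination h
  have htopA2 : yflux d1 q1 (u 2) m2 + u 2 m2 * (r - u 2 m2 - v 2 m2) = 0 := by
    have h := hutop 2 (Or.inr rfl)
    rw [hsv2] at h
    simp only [yflux]
    linear_combination h
  have htopB2 : yflux d2 q2 (v 2) m2 + v 2 m2 * (r - u 2 m2 - v 2 m2) = 0 := by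
    have h := hvtop 2 (Or.inr rfl)
    rw [hsv2] at h
    simp only [yflux]
    linear_combination h
  -- junction balance for u
  have hjuncU : yflux d1 q1 (u 3) m3 =
      yflux d1 q1 (u 1) 1 + yflux d1 q1 (u 2) 1
        - u 3 m3 * (r - u 3 m3 - v 3 m3) := by
    simp only [yflux, Nat.sub_self]
    rw [hu10, hu20]
    linear_combination hujunc
  -- hypothesis signs at the bottom fluxes of the branches
  have e11 : Yf m1 m2 m3 d1 q1 u 1 1 = yflux d1 q1 (u 1) 1 := by
    simp [Yf, seg, yflux, hm1]
  have e11v : Yf m1 m2 m3 d2 q2 v 1 1 = yflux d2 q2 (v 1) 1 := by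
    simp [Yf, seg, yflux, hm1]
  have e21 : Yf m1 m2 m3 d1 q1 u 2 1 = yflux d1 q1 (u 2) 1 := by
    simp [Yf, seg, yflux, hm2]
  have e21v : Yf m1 m2 m3 d2 q2 v 2 1 = yflux d2 q2 (v 2) 1 := by
    simp [Yf, seg, yflux, hm2]
  have hF11 : yflux d1 q1 (u 1) 1 ≤ 0 := by
    rw [← e11]; exact (hseg1c 1 le_rfl hl11).1
  have hG11 : yflux d2 q2 (v 1) 1 ≤ 0 := by
    rw [← e11v]; exact (hseg1c 1 le_rfl hl11).2
  have hF21 : 0 ≤ yflux d1 q1 (u 2) 1 := by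
    rw [← e21]; exact (hheadc 1 le_rfl htl21).1
  have hG21 : 0 ≤ yflux d2 q2 (v 2) 1 := by
    rw [← e21v]; exact (hheadc 1 le_rfl htl21).2
  -- sign of the main-river flux at the junction
  have e3 : Yf m1 m2 m3 d1 q1 u 3 m3 = yflux d1 q1 (u 3) m3 := by
    simp [Yf, yflux, hm3]
  have hF3 : yflux d1 q1 (u 3) m3 ≤ 0 := by
    rw [← e3]
    rcases eq_or_lt_of_le hlsm with heq | hlt
    · subst heq; exact hf3l
    · exact (htailc m3 (by omega) le_rfl).1
  -- branch-comparison orderings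
  have hord := stmt8_ordering d1 q1 d2 q2 r hd1 hq1 hd2' hq2' m1 m2 hm12
    (u 1) (v 1) (u 2) (v 2) hpa1 hpb1 hpa2 hpb2 hrecA1 hrecB1 hrecA2 hrecB2
    (by rw [hu10, hu20]) (by rw [hv10, hv20]) hF11 hG11 hF21 hG21
  obtain ⟨hu, hv, hWu, hWv⟩ := hord m1 hm1 le_rfl
  rcases lt_or_eq_of_le hm12 with hlt | heqm
  · -- case m1 < m2
    have hpa1m : 0 < u 1 m1 := hpa1 m1 le_rfl
    have hpb1m : 0 < v 1 m1 := hpb1 m1 le_rfl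
    have hpa2m : 0 < u 2 m1 := hpa2 m1 (by omega)
    have hpb2m : 0 < v 2 m1 := hpb2 m1 (by omega)
    have hscmp : r - u 1 m1 - v 1 m1 ≤ r - u 2 m1 - v 2 m1 := by linarith
    have hcrossA : yflux d1 q1 (u 1) m1 * u 2 m1 ≤ yflux d1 q1 (u 2) m1 * u 1 m1 := by
      simp only [yflux]
      exact stmt8_cross d1 (d1 + q1) (u 1 (m1 - 1)) (u 1 m1) (u 2 (m1 - 1)) (u 2 m1)
        hd1.le hWu
    have hcrossB : yflux d2 q2 (v 1) m1 * v 2 m1 ≤ yflux d2 q2 (v 2) m1 * v 1 m1 := by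
      simp only [yflux]
      exact stmt8_cross d2 (d2 + q2) (v 1 (m1 - 1)) (v 1 m1) (v 2 (m1 - 1)) (v 2 m1)
        hd2'.le hWv
    have hmulA : u 1 m1 * u 2 m1 * (r - u 1 m1 - v 1 m1)
        ≤ u 1 m1 * u 2 m1 * (r - u 2 m1 - v 2 m1) :=
      mul_le_mul_of_nonneg_left hscmp (mul_pos hpa1m hpa2m).le
    have hmulB : v 1 m1 * v 2 m1 * (r - u 1 m1 - v 1 m1)
        ≤ v 1 m1 * v 2 m1 * (r - u 2 m1 - v 2 m1) :=
      mul_le_mul_of_nonneg_left hscmp (mul_pos hpb1m hpb2m).le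
    have hFS : 0 ≤ yflux d1 q1 (u 2) (m1 + 1) * u 1 m1 := by
      rw [hrecA2 m1 hm1 (by omega)]
      exact stmt8_interface _ _ _ _ _ _ hpa2m.le hcrossA hmulA htopA1
    have hGS : 0 ≤ yflux d2 q2 (v 2) (m1 + 1) * v 1 m1 := by
      rw [hrecB2 m1 hm1 (by omega)]
      exact stmt8_interface _ _ _ _ _ _ hpb2m.le hcrossB hmulB htopB1
    have hFSpos : 0 ≤ yflux d1 q1 (u 2) (m1 + 1) :=
      le_of_mul_le_mul_right (by simpa using hFS) hpa1m
    have hGSpos : 0 ≤ yflux d2 q2 (v 2) (m1 + 1) :=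
      le_of_mul_le_mul_right (by simpa using hGS) hpb1m
    have hcr := stmt8_overcrowd d1 q1 d2 q2 r hd1 hq1 hd2' hq2' m2 (u 2) (v 2)
      hpa2 hpb2 hrecA2 hrecB2 htopA2 htopB2 (m1 + 1) (by omega) (by omega) hFSpos hGSpos
    simp only [Nat.add_sub_cancel] at hcr
    have hcrowd1 : r < u 1 m1 + v 1 m1 := lt_of_lt_of_le hcr (by linarith)
    have hdesc := stmt8_descent d1 q1 d2 q2 r hd1 hq1 hd2' hq2' m1 hm1 (u 1) (v 1)
      hpa1 hpb1 hrecA1 hrecB1 htopA1 htopB1 hcrowd1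
    linarith
  · -- case m1 = m2
    subst heqm
    have hcas := stmt8_eqcascade d1 q1 d2 q2 r hd1 hq1 hd2' hq2' m1 hm1
      (u 1) (v 1) (u 2) (v 2) hpa1 hpb1 hpa2 hpb2 hrecA1 hrecB1 hrecA2 hrecB2
      htopA1 htopB1 htopA2 htopB2 hu hv hWu
    have hcr := stmt8_overcrowd d1 q1 d2 q2 r hd1 hq1 hd2' hq2' m1 (u 2) (v 2)
      hpa2 hpb2 hrecA2 hrecB2 htopA2 htopB2 1 le_rfl hm1 hF21 hG21
    simp only [Nat.sub_self] at hcr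
    rw [hu20, hv20] at hcr
    have hs0 : r - u 3 m3 - v 3 m3 < 0 := by linarith
    have h0 : yflux d1 q1 (u 2) 1 = 0 := le_antisymm (hcas ▸ hF11) hF21
    have h1 : yflux d1 q1 (u 1) 1 = 0 := hcas.trans h0
    have hpos3 : 0 < yflux d1 q1 (u 3) m3 := by
      rw [hjuncU, h0, h1]
      linarith [mul_neg_of_pos_of_neg hposU hs0]
    linarith
end
end

section
/- (Lemma 4.1(i)) Let d1, q1 > 0 and let ũ be a single-species equilibrium for (d1,q1). For fixed i ∈ {1,2}, if there exists l with 1 ≤ l ≤ m_i such that f̃^i_l ≥ 0, then ũ^i_l ≥ r. -/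
open Finset Filter

noncomputable section

/-- **Lemma 4.1(i)**. -/
theorem stmt_10
    (m1 m2 m3 : ℕ) (d1 q1 r : ℝ)
    (hm1 : 1 ≤ m1) (hm12 : m1 ≤ m2) (hm3 : 2 ≤ m3)
    (hd1 : 0 < d1) (hq1 : 0 < q1) (hr : 0 < r)
    (w : ℕ → ℕ → ℝ)
    (hw : YSingleEquilibrium m1 m2 m3 d1 q1 r w)
    (i : ℕ) (hi : i = 1 ∨ i = 2)
    (l : ℕ) (hl : 1 ≤ l) (hl' : l ≤ seg m1 m2 m3 i)
    (hf : 0 ≤ Yf m1 m2 m3 d1 q1 w i l) :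
    r ≤ w i l := by
  obtain ⟨hpos, hw10, hw20, hint, hint3, hup, hdown, hjun⟩ := hw
  have hi3 : i ≠ 3 := by rcases hi with h | h <;> omega
  have hi' : i = 1 ∨ i = 2 ∨ i = 3 := by tauto
  set m := seg m1 m2 m3 i with hm
  have hm1' : 1 ≤ m := hl.trans hl'
  rw [Yf, if_neg hi3, if_pos ⟨hl, hl'⟩] at hf
  by_contra hcon
  push_neg at hcon
  have key : ∀ k, l ≤ k → k ≤ m →
      0 ≤ d1 * w i (k - 1) - (d1 + q1) * w i k ∧ w i k < r := by
    intro k hk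
    induction k, hk using Nat.le_induction with
    | base => exact fun _ => ⟨hf, hcon⟩
    | succ k hk ih =>
      intro hk1m
      obtain ⟨hF, hwk⟩ := ih (Nat.le_of_succ_le hk1m)
      have hk1 : 1 ≤ k := hl.trans hk
      have hwkpos : 0 < w i k := hpos i k hi' hk1 (Nat.le_of_succ_le hk1m)
      have heq := hint i hi k hk1 hk1m
      simp only [sub_zero] at heq
      have hF1 : 0 < d1 * w i (k + 1 - 1) - (d1 + q1) * w i (k + 1) := by
        rw [Nat.add_sub_cancel]
        nlinarith [mul_pos hwkpos (sub_pos.mpr hwk)]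
      refine ⟨hF1.le, ?_⟩
      rw [Nat.add_sub_cancel] at hF1
      nlinarith [mul_pos hq1 hr]
  obtain ⟨hFm, hwm⟩ := key m hl' le_rfl
  have hwmpos : 0 < w i m := hpos i m hi' hm1' le_rfl
  have heqm := hup i hi
  simp only [sub_zero] at heqm
  nlinarith [mul_pos hwmpos (sub_pos.mpr hwm)]
end
end

section
/- (Lemma 4.1(ii)) Let d1, q1 > 0 and let ũ be a single-species equilibrium for (d1,q1). For fixed i ∈ {1,2,3}, if there exists l with 1 ≤ l < m_i such that f̃^i_l ≤ 0, then f̃^i_k < 0 for all l+1 ≤ k ≤ m_i. -/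
open Finset Filter

noncomputable section

namespace Lem41

variable (m1 m2 m3 : ℕ) (d q r : ℝ) (w : ℕ → ℕ → ℝ)

lemma seg_one : seg m1 m2 m3 1 = m1 := by simp [seg]
lemma seg_two : seg m1 m2 m3 2 = m2 := by simp [seg]
lemma seg_three : seg m1 m2 m3 3 = m3 := by simp [seg]

lemma Yf_branch_eq {i : ℕ} (hi : i = 1 ∨ i = 2) {k : ℕ} (h1 : 1 ≤ k)
    (h2 : k ≤ seg m1 m2 m3 i) :
    Yf m1 m2 m3 d q w i k = d * w i (k - 1) - (d + q) * w i k := by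
  rcases hi with rfl | rfl <;> simp_all [Yf]

lemma Yf_branch_zero {i : ℕ} (hi : i = 1 ∨ i = 2) {k : ℕ}
    (h : seg m1 m2 m3 i < k) :
    Yf m1 m2 m3 d q w i k = 0 := by
  have hk : ¬ (1 ≤ k ∧ k ≤ seg m1 m2 m3 i) := by omega
  rcases hi with rfl | rfl <;> simp_all [Yf]

lemma Yf3_eq {k : ℕ} (h1 : 2 ≤ k) (h2 : k ≤ m3) :
    Yf m1 m2 m3 d q w 3 k = d * w 3 (k - 1) - (d + q) * w 3 k := by
  simp_all [Yf]

lemma Yf3_one : Yf m1 m2 m3 d q w 3 1 = 0 := by simp [Yf]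

lemma rec_branch (heq : YEq m1 m2 m3 d q r w fun _ _ => 0)
    {i : ℕ} (hi : i = 1 ∨ i = 2) {t : ℕ} (h1 : 1 ≤ t) (h2 : t ≤ seg m1 m2 m3 i) :
    Yf m1 m2 m3 d q w i (t + 1)
      = Yf m1 m2 m3 d q w i t + w i t * (r - w i t) := by
  obtain ⟨-, -, hint, -, hup, -, -⟩ := heq
  rcases lt_or_eq_of_le h2 with hlt | heqt
  · rw [Yf_branch_eq m1 m2 m3 d q w hi (by omega) (by omega : t + 1 ≤ seg m1 m2 m3 i),
        Yf_branch_eq m1 m2 m3 d q w hi h1 h2]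
    have h := hint i hi t h1 (by omega)
    simp only [Nat.add_sub_cancel] at *
    linear_combination -h
  · rw [Yf_branch_zero m1 m2 m3 d q w hi (by omega),
        Yf_branch_eq m1 m2 m3 d q w hi h1 h2]
    have h := hup i hi
    rw [← heqt] at h
    linear_combination -h

lemma rec3 (heq : YEq m1 m2 m3 d q r w fun _ _ => 0)
    {t : ℕ} (h1 : 1 ≤ t) (h2 : t + 1 ≤ m3) :
    Yf m1 m2 m3 d q w 3 (t + 1)
      = Yf m1 m2 m3 d q w 3 t + w 3 t * (r - w 3 t) := by
  obtain ⟨-, -, -, hint, -, hdown, -⟩ := heq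
  rcases Nat.lt_or_ge t 2 with ht2 | ht2
  · have ht1 : t = 1 := by omega
    subst ht1
    rw [Yf3_eq m1 m2 m3 d q w (by omega) h2, Yf3_one]
    simp only [Nat.add_sub_cancel]
    linear_combination -hdown
  · rw [Yf3_eq m1 m2 m3 d q w (by omega) h2, Yf3_eq m1 m2 m3 d q w ht2 (by omega)]
    have h := hint t ht2 h2
    simp only [Nat.add_sub_cancel] at *
    linear_combination -h

lemma junction (hm3 : 2 ≤ m3) (heq : YEq m1 m2 m3 d q r w fun _ _ => 0)
    (hm1 : 1 ≤ m1) (hm12 : m1 ≤ m2) :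
    Yf m1 m2 m3 d q w 1 1 + Yf m1 m2 m3 d q w 2 1
      = Yf m1 m2 m3 d q w 3 m3 + w 3 m3 * (r - w 3 m3) := by
  obtain ⟨e1, e2, -, -, -, -, hjun⟩ := heq
  rw [Yf3_eq m1 m2 m3 d q w hm3 le_rfl,
      Yf_branch_eq m1 m2 m3 d q w (Or.inl rfl) le_rfl (by rw [seg_one]; omega),
      Yf_branch_eq m1 m2 m3 d q w (Or.inr rfl) le_rfl (by rw [seg_two]; omega)]
  norm_num [e1, e2]
  linear_combination -hjun

lemma branch_false (hm1 : 1 ≤ m1) (hm12 : m1 ≤ m2)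
    (hd : 0 < d) (hq : 0 < q)
    (hpos : YPos m1 m2 m3 w) (heq : YEq m1 m2 m3 d q r w fun _ _ => 0)
    {i : ℕ} (hi : i = 1 ∨ i = 2) :
    ∀ n t, t + n = seg m1 m2 m3 i → 1 ≤ t →
      0 ≤ Yf m1 m2 m3 d q w i t → w i t < r → False := by
  have hior : i = 1 ∨ i = 2 ∨ i = 3 := by tauto
  intro n
  induction n with
  | zero =>
    intro t ht h1 hfp hwr
    have h2 : t ≤ seg m1 m2 m3 i := by omega
    have hrec := rec_branch m1 m2 m3 d q r w heq hi h1 h2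
    rw [Yf_branch_zero m1 m2 m3 d q w hi (by omega)] at hrec
    have hwt : 0 < w i t := hpos i t hior h1 h2
    have hm := mul_pos hwt (sub_pos.mpr hwr)
    linarith
  | succ n ih =>
    intro t ht h1 hfp hwr
    have h2 : t ≤ seg m1 m2 m3 i := by omega
    have hwt : 0 < w i t := hpos i t hior h1 h2
    have hrec := rec_branch m1 m2 m3 d q r w heq hi h1 h2
    have hf1 : 0 < Yf m1 m2 m3 d q w i (t + 1) := by
      have hm := mul_pos hwt (sub_pos.mpr hwr); linarith
    have heq1 : Yf m1 m2 m3 d q w i (t + 1) = d * w i t - (d + q) * w i (t + 1) := by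
      rw [Yf_branch_eq m1 m2 m3 d q w hi (by omega) (by omega)]
      simp only [Nat.add_sub_cancel]
    have hqt := mul_pos hq hwt
    have hmul : (d + q) * w i (t + 1) < (d + q) * w i t := by
      rw [heq1] at hf1; nlinarith
    have hlt : w i (t + 1) < w i t := lt_of_mul_lt_mul_left hmul (by linarith)
    exact ih (t + 1) (by omega) (by omega) hf1.le (hlt.trans hwr)

lemma branch_start_false (hm1 : 1 ≤ m1) (hm12 : m1 ≤ m2) (hm3 : 2 ≤ m3)
    (hd : 0 < d) (hq : 0 < q)
    (hpos : YPos m1 m2 m3 w) (heq : YEq m1 m2 m3 d q r w fun _ _ => 0)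
    {i : ℕ} (hi : i = 1 ∨ i = 2)
    (hb : 0 < Yf m1 m2 m3 d q w i 1) (hwr3 : w 3 m3 < r) : False := by
  have h1seg : 1 ≤ seg m1 m2 m3 i := by
    rcases hi with rfl | rfl <;> simp [seg] <;> omega
  have hw0 : w i 0 = w 3 m3 := by
    rcases hi with rfl | rfl
    · exact heq.1
    · exact heq.2.1
  have hw3 : 0 < w 3 m3 := hpos 3 m3 (by tauto) (by omega) (by rw [seg_three])
  have heq1 : Yf m1 m2 m3 d q w i 1 = d * w i 0 - (d + q) * w i 1 :=
    Yf_branch_eq m1 m2 m3 d q w hi le_rfl h1seg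
  have hq3 := mul_pos hq hw3
  have hmul : (d + q) * w i 1 < (d + q) * w 3 m3 := by
    rw [heq1, hw0] at hb; nlinarith
  have hlt : w i 1 < w 3 m3 := lt_of_mul_lt_mul_left hmul (by linarith)
  exact branch_false m1 m2 m3 d q r w hm1 hm12 hd hq hpos heq hi
    (seg m1 m2 m3 i - 1) 1 (by omega) le_rfl hb.le (hlt.trans hwr3)

lemma main3_false (hm1 : 1 ≤ m1) (hm12 : m1 ≤ m2) (hm3 : 2 ≤ m3)
    (hd : 0 < d) (hq : 0 < q)
    (hpos : YPos m1 m2 m3 w) (heq : YEq m1 m2 m3 d q r w fun _ _ => 0) :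
    ∀ n t, t + n = m3 → 1 ≤ t →
      0 ≤ Yf m1 m2 m3 d q w 3 t → w 3 t < r → False := by
  intro n
  induction n with
  | zero =>
    intro t ht h1 hfp hwr
    have ht' : t = m3 := by omega
    rw [ht'] at hfp hwr
    have hjun := junction m1 m2 m3 d q r w hm3 heq hm1 hm12
    have hw3 : 0 < w 3 m3 := hpos 3 m3 (by tauto) (by omega) (by rw [seg_three])
    have hm := mul_pos hw3 (sub_pos.mpr hwr)
    have hsum : 0 < Yf m1 m2 m3 d q w 1 1 + Yf m1 m2 m3 d q w 2 1 := by linarith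
    have hbr : 0 < Yf m1 m2 m3 d q w 1 1 ∨ 0 < Yf m1 m2 m3 d q w 2 1 := by
      by_contra hc; push_neg at hc; linarith [hc.1, hc.2]
    rcases hbr with hb | hb
    · exact branch_start_false m1 m2 m3 d q r w hm1 hm12 hm3 hd hq hpos heq
        (Or.inl rfl) hb hwr
    · exact branch_start_false m1 m2 m3 d q r w hm1 hm12 hm3 hd hq hpos heq
        (Or.inr rfl) hb hwr
  | succ n ih =>
    intro t ht h1 hfp hwr
    have h2 : t + 1 ≤ m3 := by omega
    have hwt : 0 < w 3 t := hpos 3 t (by tauto) h1 (by rw [seg_three]; omega)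
    have hrec := rec3 m1 m2 m3 d q r w heq h1 h2
    have hf1 : 0 < Yf m1 m2 m3 d q w 3 (t + 1) := by
      have hm := mul_pos hwt (sub_pos.mpr hwr); linarith
    have heq1 : Yf m1 m2 m3 d q w 3 (t + 1) = d * w 3 t - (d + q) * w 3 (t + 1) := by
      rw [Yf3_eq m1 m2 m3 d q w (by omega) h2]
      simp only [Nat.add_sub_cancel]
    have hqt := mul_pos hq hwt
    have hmul : (d + q) * w 3 (t + 1) < (d + q) * w 3 t := by
      rw [heq1] at hf1; nlinarith
    have hlt : w 3 (t + 1) < w 3 t := lt_of_mul_lt_mul_left hmul (by linarith)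
    exact ih (t + 1) (by omega) (by omega) hf1.le (hlt.trans hwr)

end Lem41

/-- **Lemma 4.1(ii)**. -/
theorem stmt_11
    (m1 m2 m3 : ℕ) (d1 q1 r : ℝ)
    (hm1 : 1 ≤ m1) (hm12 : m1 ≤ m2) (hm3 : 2 ≤ m3)
    (hd1 : 0 < d1) (hq1 : 0 < q1) (hr : 0 < r)
    (w : ℕ → ℕ → ℝ)
    (hw : YSingleEquilibrium m1 m2 m3 d1 q1 r w)
    (i : ℕ) (hi : i = 1 ∨ i = 2 ∨ i = 3)
    (l : ℕ) (hl : 1 ≤ l) (hl' : l < seg m1 m2 m3 i)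
    (hf : Yf m1 m2 m3 d1 q1 w i l ≤ 0) :
    ∀ k, l + 1 ≤ k → k ≤ seg m1 m2 m3 i → Yf m1 m2 m3 d1 q1 w i k < 0 := by
  obtain ⟨hpos, heq⟩ := hw
  have Hfalse : ∀ t, 1 ≤ t → t ≤ seg m1 m2 m3 i →
      0 ≤ Yf m1 m2 m3 d1 q1 w i t → w i t < r → False := by
    rcases hi with rfl | rfl | rfl
    · intro t h1 h2 h3 h4
      exact Lem41.branch_false m1 m2 m3 d1 q1 r w hm1 hm12 hd1 hq1 hpos heq
        (Or.inl rfl) (seg m1 m2 m3 1 - t) t (by omega) h1 h3 h4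
    · intro t h1 h2 h3 h4
      exact Lem41.branch_false m1 m2 m3 d1 q1 r w hm1 hm12 hd1 hq1 hpos heq
        (Or.inr rfl) (seg m1 m2 m3 2 - t) t (by omega) h1 h3 h4
    · intro t h1 h2 h3 h4
      rw [Lem41.seg_three] at h2
      exact Lem41.main3_false m1 m2 m3 d1 q1 r w hm1 hm12 hm3 hd1 hq1 hpos heq
        (m3 - t) t (by omega) h1 h3 h4
  have Hrec : ∀ t, 1 ≤ t → t + 1 ≤ seg m1 m2 m3 i →
      Yf m1 m2 m3 d1 q1 w i (t + 1)
        = Yf m1 m2 m3 d1 q1 w i t + w i t * (r - w i t) := by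
    rcases hi with rfl | rfl | rfl
    · intro t h1 h2
      exact Lem41.rec_branch m1 m2 m3 d1 q1 r w heq (Or.inl rfl) h1 (by omega)
    · intro t h1 h2
      exact Lem41.rec_branch m1 m2 m3 d1 q1 r w heq (Or.inr rfl) h1 (by omega)
    · intro t h1 h2
      rw [Lem41.seg_three] at h2
      exact Lem41.rec3 m1 m2 m3 d1 q1 r w heq h1 h2
  have Hval : ∀ t, 2 ≤ t → t ≤ seg m1 m2 m3 i →
      Yf m1 m2 m3 d1 q1 w i t = d1 * w i (t - 1) - (d1 + q1) * w i t := by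
    rcases hi with rfl | rfl | rfl
    · intro t h1 h2
      exact Lem41.Yf_branch_eq m1 m2 m3 d1 q1 w (Or.inl rfl) (by omega) h2
    · intro t h1 h2
      exact Lem41.Yf_branch_eq m1 m2 m3 d1 q1 w (Or.inr rfl) (by omega) h2
    · intro t h1 h2
      rw [Lem41.seg_three] at h2
      exact Lem41.Yf3_eq m1 m2 m3 d1 q1 w h1 h2
  have step : ∀ j, 1 ≤ j → j + 1 ≤ seg m1 m2 m3 i →
      Yf m1 m2 m3 d1 q1 w i j ≤ 0 → Yf m1 m2 m3 d1 q1 w i (j + 1) < 0 := by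
    intro j hj1 hj2 hfj
    by_contra hc
    push_neg at hc
    have hrec := Hrec j hj1 hj2
    have hwj : 0 < w i j := hpos i j hi hj1 (by omega)
    have hprod : 0 ≤ w i j * (r - w i j) := by linarith
    have hwjr : w i j ≤ r := by nlinarith
    have heqj := Hval (j + 1) (by omega) hj2
    simp only [Nat.add_sub_cancel] at heqj
    have hqw := mul_pos hq1 hwj
    have hmul : (d1 + q1) * w i (j + 1) < (d1 + q1) * w i j := by
      rw [heqj] at hc; nlinarith
    have hlt : w i (j + 1) < w i j := lt_of_mul_lt_mul_left hmul (by linarith)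
    exact Hfalse (j + 1) (by omega) hj2 hc (lt_of_lt_of_le hlt hwjr)
  intro k hk1
  induction k, hk1 using Nat.le_induction with
  | base => intro hk2; exact step l hl (by omega) hf
  | succ k hk ih =>
    intro hk2
    have hk' : k ≤ seg m1 m2 m3 i := by omega
    exact step k (by omega) (by omega) (ih hk').le
end
end

section
/- (Lemma 4.2(i)) Let d1, q1 > 0 and let ũ be a single-species equilibrium for (d1,q1). Then f̃^3_k < 0 for all 2 ≤ k ≤ m3, and f̃^2_k < 0 for all 1 ≤ k ≤ m2. -/
open Finset Filter

noncomputable section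

/-! ### Auxiliary machinery for the proof of Lemma 4.2(i) -/

/-- The flux `d * u (k-1) - (d+q) * u k` along a chain of patches. -/
private def Fb (d q : ℝ) (u : ℕ → ℝ) (k : ℕ) : ℝ := d * u (k - 1) - (d + q) * u k

private lemma Fb_succ (d q : ℝ) (u : ℕ → ℝ) (k : ℕ) :
    Fb d q u (k + 1) = d * u k - (d + q) * u (k + 1) := by
  simp [Fb]

private lemma uplt {d q r a b : ℝ} (hd : 0 < d) (hq : 0 < q) (hr : 0 < r)
    (ha : a ≤ r) (hF : 0 ≤ d * a - (d + q) * b) : b < r := by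
  nlinarith [mul_pos hq hr]

private lemma upgt {d q r a b : ℝ} (hd : 0 < d) (hq : 0 < q) (hr : 0 < r)
    (hb : r ≤ b) (hF : 0 ≤ d * a - (d + q) * b) : r < a := by
  nlinarith [mul_pos hq hr]

private lemma mul_le_r {r b : ℝ} (hb : 0 < b) (h : 0 ≤ b * (r - b)) : b ≤ r := by
  nlinarith

private lemma mul_lt_r {r b : ℝ} (hb : 0 < b) (h : 0 < b * (r - b)) : b < r := by
  nlinarith

/-- Upward propagation: a nonnegative flux at a patch with value below `r` is impossible
on a branch (chain with no-flux upstream end). -/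
private lemma bP1 {d q r : ℝ} {n : ℕ} {u : ℕ → ℝ}
    (hd : 0 < d) (hq : 0 < q) (hr : 0 < r)
    (hpos : ∀ k, 1 ≤ k → k ≤ n → 0 < u k)
    (hrec : ∀ k, 1 ≤ k → k + 1 ≤ n →
      Fb d q u (k + 1) = Fb d q u k + u k * (r - u k))
    (htop : Fb d q u n + u n * (r - u n) = 0)
    (k : ℕ) (hk1 : 1 ≤ k) (hkn : k ≤ n) (hF : 0 ≤ Fb d q u k) (hwk : u k < r) :
    False := by
  have key : ∀ j, k ≤ j → j ≤ n → 0 ≤ Fb d q u j ∧ u j < r := by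
    intro j hj
    induction j, hj using Nat.le_induction with
    | base => exact fun _ => ⟨hF, hwk⟩
    | succ j hj ih =>
      intro hj1n
      obtain ⟨hFj, hwj⟩ := ih (by omega)
      have hujpos := hpos j (by omega) (by omega)
      have hrecj := hrec j (by omega) hj1n
      have hFj1 : 0 ≤ Fb d q u (j + 1) := by nlinarith
      refine ⟨hFj1, ?_⟩
      have he := Fb_succ d q u j
      have hpos1 := hpos (j + 1) (by omega) hj1n
      nlinarith [mul_pos hq hr]
  obtain ⟨hFn, hwn⟩ := key n hkn le_rfl
  have hnpos := hpos n (by omega) le_rfl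
  nlinarith

/-- Downward propagation of nonnegative flux together with `r ≤ u`. -/
private lemma bDown {d q r : ℝ} {n : ℕ} {u : ℕ → ℝ}
    (hd : 0 < d) (hq : 0 < q) (hr : 0 < r)
    (hpos : ∀ k, 1 ≤ k → k ≤ n → 0 < u k)
    (hrec : ∀ k, 1 ≤ k → k + 1 ≤ n →
      Fb d q u (k + 1) = Fb d q u k + u k * (r - u k))
    (k1 : ℕ) (hk11 : 1 ≤ k1) (hk1n : k1 ≤ n) (hF : 0 ≤ Fb d q u k1) (hwk : r ≤ u k1) :
    ∀ j, 1 ≤ j → j ≤ k1 → 0 ≤ Fb d q u j ∧ r ≤ u j := by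
  have key : ∀ i, ∀ j, j + i = k1 → 1 ≤ j → 0 ≤ Fb d q u j ∧ r ≤ u j := by
    intro i
    induction i with
    | zero =>
      intro j hj h1
      have hjk : j = k1 := by omega
      subst hjk
      exact ⟨hF, hwk⟩
    | succ i ih =>
      intro j hji h1
      obtain ⟨hF', hw'⟩ := ih (j + 1) (by omega) (by omega)
      have hj1n : j + 1 ≤ n := by omega
      have he := Fb_succ d q u j
      have hup1 := hpos (j + 1) (by omega) hj1n
      have hujr : r < u j := by nlinarith
      have hrecj := hrec j h1 hj1n
      constructor
      · have hupos : 0 < u j := lt_trans hr hujr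
        nlinarith
      · exact hujr.le
  intro j h1 h2
  exact key (k1 - j) j (by omega) h1

/-- If some flux on a branch is nonnegative, then at the largest such index the patch
value is at least `r`. -/
private lemma bMax {d q r : ℝ} {n : ℕ} {u : ℕ → ℝ}
    (hd : 0 < d) (hq : 0 < q) (hr : 0 < r)
    (hpos : ∀ k, 1 ≤ k → k ≤ n → 0 < u k)
    (hrec : ∀ k, 1 ≤ k → k + 1 ≤ n →
      Fb d q u (k + 1) = Fb d q u k + u k * (r - u k))
    (htop : Fb d q u n + u n * (r - u n) = 0)
    (k : ℕ) (hk1 : 1 ≤ k) (hkn : k ≤ n) (hF : 0 ≤ Fb d q u k) :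
    ∃ k1, k ≤ k1 ∧ k1 ≤ n ∧ 0 ≤ Fb d q u k1 ∧ r ≤ u k1 := by
  classical
  set S := (Finset.Icc 1 n).filter (fun j => 0 ≤ Fb d q u j) with hSdef
  have hmemS : ∀ j, j ∈ S ↔ (1 ≤ j ∧ j ≤ n) ∧ 0 ≤ Fb d q u j := by
    intro j
    rw [hSdef, Finset.mem_filter, Finset.mem_Icc]
  have hkS : k ∈ S := (hmemS k).mpr ⟨⟨hk1, hkn⟩, hF⟩
  have hne : S.Nonempty := ⟨k, hkS⟩
  obtain ⟨⟨h11, h1n⟩, hF1⟩ := (hmemS _).mp (S.max'_mem hne)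
  refine ⟨S.max' hne, Finset.le_max' S k hkS, h1n, hF1, ?_⟩
  rcases eq_or_lt_of_le h1n with heq | hlt
  · rw [heq] at hF1 ⊢
    have hupos := hpos n (by omega) le_rfl
    by_contra hcon
    push_neg at hcon
    nlinarith
  · have hnotS : S.max' hne + 1 ∉ S := by
      intro hmem'
      have := Finset.le_max' S _ hmem'
      omega
    have hFk11 : Fb d q u (S.max' hne + 1) < 0 := by
      by_contra hcon
      push_neg at hcon
      exact hnotS ((hmemS _).mpr ⟨⟨by omega, by omega⟩, hcon⟩)
    have hrecj := hrec (S.max' hne) h11 (by omega)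
    have hupos := hpos (S.max' hne) h11 h1n
    by_contra hcon
    push_neg at hcon
    nlinarith

/-- The key comparison lemma between the two branches. -/
private lemma bCMP {d q r : ℝ} {n1 n2 : ℕ} {u v : ℕ → ℝ}
    (hd : 0 < d) (hq : 0 < q) (hr : 0 < r)
    (hn1 : 1 ≤ n1) (hn12 : n1 ≤ n2)
    (hposu : ∀ k, 1 ≤ k → k ≤ n1 → 0 < u k)
    (hrecu : ∀ k, 1 ≤ k → k + 1 ≤ n1 →
      Fb d q u (k + 1) = Fb d q u k + u k * (r - u k))
    (htopu : Fb d q u n1 + u n1 * (r - u n1) = 0)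
    (hposv : ∀ k, 1 ≤ k → k ≤ n2 → 0 < v k)
    (hrecv : ∀ k, 1 ≤ k → k + 1 ≤ n2 →
      Fb d q v (k + 1) = Fb d q v k + v k * (r - v k))
    (htopv : Fb d q v n2 + v n2 * (r - v n2) = 0)
    (h0 : u 0 = v 0)
    (hFu : ∀ k, 1 ≤ k → k ≤ n1 → Fb d q u k < 0)
    (hFv1 : 0 ≤ Fb d q v 1) : False := by
  have inv : ∀ k, 1 ≤ k → k ≤ n1 →
      Fb d q u k * v k < Fb d q v k * u k ∧ v k < u k := by
    intro k hk
    induction k, hk using Nat.le_induction with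
    | base =>
      intro h1n
      have hu1 := hposu 1 le_rfl h1n
      have hv1 := hposv 1 le_rfl (le_trans h1n hn12)
      have hFu1 := hFu 1 le_rfl h1n
      have e1 : Fb d q u 1 = d * u 0 - (d + q) * u 1 := by simp [Fb]
      have e2 : Fb d q v 1 = d * v 0 - (d + q) * v 1 := by simp [Fb]
      constructor
      · calc Fb d q u 1 * v 1 < 0 := mul_neg_of_neg_of_pos hFu1 hv1
          _ ≤ Fb d q v 1 * u 1 := mul_nonneg hFv1 hu1.le
      · nlinarith
    | succ k hk ih =>
      intro hk1n
      obtain ⟨hinv, hlt⟩ := ih (by omega)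
      have ha := hposu k (by omega) (by omega)
      have hb := hposv k (by omega) (by omega)
      have ha' := hposu (k + 1) (by omega) hk1n
      have hb' := hposv (k + 1) (by omega) (by omega)
      have hru := hrecu k (by omega) hk1n
      have hrv := hrecv k (by omega) (by omega)
      have hz : Fb d q u (k + 1) * v k < Fb d q v (k + 1) * u k := by
        rw [hru, hrv]
        nlinarith [mul_pos (mul_pos ha hb) (sub_pos.mpr hlt)]
      have eu := Fb_succ d q u k
      have ev := Fb_succ d q v k
      have hcross : v (k + 1) * u k < u (k + 1) * v k := by
        rw [eu, ev] at hz
        nlinarith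
      have hwlt : v (k + 1) < u (k + 1) := by nlinarith
      refine ⟨?_, hwlt⟩
      have h2 : (d + q) * (Fb d q u (k + 1) * v (k + 1) - Fb d q v (k + 1) * u (k + 1))
          = d * (Fb d q u (k + 1) * v k - Fb d q v (k + 1) * u k) := by
        linear_combination Fb d q u (k + 1) * ev - Fb d q v (k + 1) * eu
      nlinarith
  obtain ⟨hinv, hlt⟩ := inv n1 hn1 le_rfl
  have ha := hposu n1 hn1 le_rfl
  have hb := hposv n1 hn1 hn12
  have e1 : Fb d q u n1 = u n1 * (u n1 - r) := by linear_combination htopu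
  rcases eq_or_lt_of_le hn12 with heq | hlt2
  · rw [← heq] at htopv
    have e2 : Fb d q v n1 = v n1 * (v n1 - r) := by linear_combination htopv
    rw [e1, e2] at hinv
    nlinarith [mul_pos (mul_pos ha hb) (sub_pos.mpr hlt)]
  · have hrecn := hrecv n1 hn1 (by omega)
    have hbadv : 0 ≤ Fb d q v (n1 + 1) := by
      rw [hrecn]
      rw [e1] at hinv
      nlinarith [mul_pos (mul_pos ha hb) (sub_pos.mpr hlt)]
    obtain ⟨k1, hk1ge, hk1le, hk1F, hk1w⟩ :=
      bMax hd hq hr hposv hrecv htopv (n1 + 1) (by omega) (by omega) hbadv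
    have hdn := bDown hd hq hr hposv hrecv k1 (by omega) hk1le hk1F hk1w n1 hn1 (by omega)
    have hFun := hFu n1 hn1 le_rfl
    have hur : 0 < u n1 - r := by linarith [hdn.2]
    nlinarith [mul_pos ha hur]

/-- **Lemma 4.2(i)**. -/
theorem stmt_12
    (m1 m2 m3 : ℕ) (d1 q1 r : ℝ)
    (hm1 : 1 ≤ m1) (hm12 : m1 ≤ m2) (hm3 : 2 ≤ m3)
    (hd1 : 0 < d1) (hq1 : 0 < q1) (hr : 0 < r)
    (w : ℕ → ℕ → ℝ)
    (hw : YSingleEquilibrium m1 m2 m3 d1 q1 r w) :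
    (∀ k, 2 ≤ k → k ≤ m3 → Yf m1 m2 m3 d1 q1 w 3 k < 0) ∧
      (∀ k, 1 ≤ k → k ≤ m2 → Yf m1 m2 m3 d1 q1 w 2 k < 0) := by
  obtain ⟨hwpos, h10, h20, hbr, h3i, hupz, hdown, hjun⟩ := hw
  have hseg1 : seg m1 m2 m3 1 = m1 := rfl
  have hseg2 : seg m1 m2 m3 2 = m2 := rfl
  have hseg3 : seg m1 m2 m3 3 = m3 := rfl
  have hw1pos : ∀ k, 1 ≤ k → k ≤ m1 → 0 < w 1 k := fun k h1 h2 =>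
    hwpos 1 k (Or.inl rfl) h1 (by rw [hseg1]; exact h2)
  have hw2pos : ∀ k, 1 ≤ k → k ≤ m2 → 0 < w 2 k := fun k h1 h2 =>
    hwpos 2 k (Or.inr (Or.inl rfl)) h1 (by rw [hseg2]; exact h2)
  have hw3pos : ∀ k, 1 ≤ k → k ≤ m3 → 0 < w 3 k := fun k h1 h2 =>
    hwpos 3 k (Or.inr (Or.inr rfl)) h1 (by rw [hseg3]; exact h2)
  have hApos : 0 < w 3 m3 := hw3pos m3 (by omega) le_rfl
  -- branch packages
  have hrec1 : ∀ k, 1 ≤ k → k + 1 ≤ m1 →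
      Fb d1 q1 (w 1) (k + 1) = Fb d1 q1 (w 1) k + w 1 k * (r - w 1 k) := by
    intro k h1 h2
    have h := hbr 1 (Or.inl rfl) k h1 (by rw [hseg1]; exact h2)
    rw [Fb_succ]
    simp only [Fb]
    linear_combination -h
  have hrec2 : ∀ k, 1 ≤ k → k + 1 ≤ m2 →
      Fb d1 q1 (w 2) (k + 1) = Fb d1 q1 (w 2) k + w 2 k * (r - w 2 k) := by
    intro k h1 h2
    have h := hbr 2 (Or.inr rfl) k h1 (by rw [hseg2]; exact h2)
    rw [Fb_succ]
    simp only [Fb]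
    linear_combination -h
  have hrec3 : ∀ k, 2 ≤ k → k + 1 ≤ m3 →
      Fb d1 q1 (w 3) (k + 1) = Fb d1 q1 (w 3) k + w 3 k * (r - w 3 k) := by
    intro k h1 h2
    have h := h3i k h1 h2
    rw [Fb_succ]
    simp only [Fb]
    linear_combination -h
  have htop1 : Fb d1 q1 (w 1) m1 + w 1 m1 * (r - w 1 m1) = 0 := by
    have h := hupz 1 (Or.inl rfl)
    rw [hseg1] at h
    simp only [Fb]
    linear_combination h
  have htop2 : Fb d1 q1 (w 2) m2 + w 2 m2 * (r - w 2 m2) = 0 := by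
    have h := hupz 2 (Or.inr rfl)
    rw [hseg2] at h
    simp only [Fb]
    linear_combination h
  have h32 : Fb d1 q1 (w 3) 2 = w 3 1 * (r - w 3 1) := by
    have e : Fb d1 q1 (w 3) 2 = d1 * w 3 1 - (d1 + q1) * w 3 2 := by
      simp [Fb]
    rw [e]
    linear_combination -hdown
  have e11 : Fb d1 q1 (w 1) 1 = d1 * w 3 m3 - (d1 + q1) * w 1 1 := by
    simp [Fb, h10]
  have e21 : Fb d1 q1 (w 2) 1 = d1 * w 3 m3 - (d1 + q1) * w 2 1 := by
    simp [Fb, h20]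
  have hjunc : Fb d1 q1 (w 3) m3
      = Fb d1 q1 (w 1) 1 + Fb d1 q1 (w 2) 1 + w 3 m3 * (w 3 m3 - r) := by
    rw [e11, e21]
    simp only [Fb]
    linear_combination hjun
  -- Goal 1 : all main-channel fluxes are negative
  have G1 : ∀ k, 2 ≤ k → k ≤ m3 → Fb d1 q1 (w 3) k < 0 := by
    by_contra hcon
    push_neg at hcon
    obtain ⟨k, hk2, hkm, hkF⟩ := hcon
    classical
    set S := (Finset.Icc 2 m3).filter (fun j => 0 ≤ Fb d1 q1 (w 3) j) with hSdef
    have hmemS : ∀ j, j ∈ S ↔ (2 ≤ j ∧ j ≤ m3) ∧ 0 ≤ Fb d1 q1 (w 3) j := by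
      intro j
      rw [hSdef, Finset.mem_filter, Finset.mem_Icc]
    have hkS : k ∈ S := (hmemS k).mpr ⟨⟨hk2, hkm⟩, hkF⟩
    have hne : S.Nonempty := ⟨k, hkS⟩
    obtain ⟨k0, hk0S, hk0min⟩ := S.exists_min_image id hne
    obtain ⟨⟨hk02, hk0m⟩, hk0F⟩ := (hmemS k0).mp hk0S
    have hk0w : w 3 k0 < r := by
      have hFk0e : Fb d1 q1 (w 3) k0 = d1 * w 3 (k0 - 1) - (d1 + q1) * w 3 k0 := rfl
      have hwle : w 3 (k0 - 1) ≤ r := by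
        rcases Nat.lt_or_ge k0 3 with hlt | hge
        · have hk0eq : k0 = 2 := by omega
          rw [hk0eq, h32] at hk0F
          have hw31 := hw3pos 1 le_rfl (by omega)
          have h31r := mul_le_r hw31 hk0F
          rw [hk0eq]
          norm_num
          exact h31r
        · have hm1S : k0 - 1 ∉ S := by
            intro hmem'
            have h' := hk0min _ hmem'
            simp only [id_eq] at h'
            omega
          have hFm1 : Fb d1 q1 (w 3) (k0 - 1) < 0 := by
            by_contra h'
            push_neg at h'
            exact hm1S ((hmemS _).mpr ⟨⟨by omega, by omega⟩, h'⟩)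
          have hco : k0 - 1 + 1 = k0 := by omega
          have hrecj := hrec3 (k0 - 1) (by omega) (by omega)
          rw [hco] at hrecj
          have hwpos' := hw3pos (k0 - 1) (by omega) (by omega)
          have hprod : 0 < w 3 (k0 - 1) * (r - w 3 (k0 - 1)) := by linarith
          exact (mul_lt_r hwpos' hprod).le
      exact uplt hd1 hq1 hr hwle (hFk0e ▸ hk0F)
    have hup3 : ∀ j, k0 ≤ j → j ≤ m3 → 0 ≤ Fb d1 q1 (w 3) j ∧ w 3 j < r := by
      intro j hj
      induction j, hj using Nat.le_induction with
      | base => exact fun _ => ⟨hk0F, hk0w⟩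
      | succ j hj ih =>
        intro hjm
        obtain ⟨hFj, hwj⟩ := ih (by omega)
        have hwjpos := hw3pos j (by omega) (by omega)
        have hrecj := hrec3 j (by omega) hjm
        have hprod : 0 < w 3 j * (r - w 3 j) := mul_pos hwjpos (by linarith)
        have hFj1 : 0 ≤ Fb d1 q1 (w 3) (j + 1) := by linarith
        exact ⟨hFj1, uplt hd1 hq1 hr hwj.le (Fb_succ d1 q1 (w 3) j ▸ hFj1)⟩
    obtain ⟨hFm, hwm⟩ := hup3 m3 hk0m le_rfl
    have hjunc' : Fb d1 q1 (w 3) m3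
        = Fb d1 q1 (w 1) 1 + Fb d1 q1 (w 2) 1 - w 3 m3 * (r - w 3 m3) := by
      linear_combination hjunc
    have hA2 : 0 < w 3 m3 * (r - w 3 m3) := mul_pos hApos (by linarith)
    have hsum : 0 < Fb d1 q1 (w 1) 1 + Fb d1 q1 (w 2) 1 := by linarith
    rcases lt_or_ge 0 (Fb d1 q1 (w 1) 1) with h | h
    · have hw11r : w 1 1 < r := uplt hd1 hq1 hr hwm.le (e11 ▸ h.le)
      exact bP1 hd1 hq1 hr hw1pos hrec1 htop1 1 le_rfl (by omega) h.le hw11r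
    · have h2 : 0 < Fb d1 q1 (w 2) 1 := by linarith
      have hw21r : w 2 1 < r := uplt hd1 hq1 hr hwm.le (e21 ▸ h2.le)
      exact bP1 hd1 hq1 hr hw2pos hrec2 htop2 1 le_rfl (by omega) h2.le hw21r
  -- Goal 2 : all fluxes on branch 2 are negative
  have G2 : ∀ k, 1 ≤ k → k ≤ m2 → Fb d1 q1 (w 2) k < 0 := by
    by_contra hcon
    push_neg at hcon
    obtain ⟨k, hk1, hkm, hkF⟩ := hcon
    obtain ⟨k1, hk1ge, hk1le, hk1F, hk1w⟩ :=
      bMax hd1 hq1 hr hw2pos hrec2 htop2 k hk1 hkm hkF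
    obtain ⟨hF21, hw21⟩ :=
      bDown hd1 hq1 hr hw2pos hrec2 k1 (by omega) hk1le hk1F hk1w 1 le_rfl (by omega)
    have hAr : r < w 3 m3 := upgt hd1 hq1 hr hw21 (e21 ▸ hF21)
    have hF3 := G1 m3 hm3 le_rfl
    by_cases hb1 : ∃ j, 1 ≤ j ∧ j ≤ m1 ∧ 0 ≤ Fb d1 q1 (w 1) j
    · obtain ⟨j, hj1, hjm, hjF⟩ := hb1
      obtain ⟨k1', hk1ge', hk1le', hk1F', hk1w'⟩ :=
        bMax hd1 hq1 hr hw1pos hrec1 htop1 j hj1 hjm hjF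
      obtain ⟨hF11, _⟩ :=
        bDown hd1 hq1 hr hw1pos hrec1 k1' (by omega) hk1le' hk1F' hk1w' 1 le_rfl (by omega)
      have hA3 : 0 < w 3 m3 * (w 3 m3 - r) := mul_pos hApos (by linarith)
      linarith
    · push_neg at hb1
      exact bCMP hd1 hq1 hr hm1 hm12 hw1pos hrec1 htop1 hw2pos hrec2 htop2
        (h10.trans h20.symm) hb1 hF21
  constructor
  · intro k hk2 hkm
    have h := G1 k hk2 hkm
    have hY : Yf m1 m2 m3 d1 q1 w 3 k = Fb d1 q1 (w 3) k := by
      simp [Yf, Fb, hk2, hkm]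
    rw [hY]
    exact h
  · intro k hk1 hkm
    have h := G2 k hk1 hkm
    have hY : Yf m1 m2 m3 d1 q1 w 2 k = Fb d1 q1 (w 2) k := by
      simp [Yf, Fb, seg, hk1, hkm]
    rw [hY]
    exact h
end
end

section
/- (Lemma 4.2(ii)) Let d1, q1 > 0 and let ũ be a single-species equilibrium for (d1,q1). Then for every 1 ≤ k ≤ m1, both f̃^1_k + f̃^2_k < 0 and f̃^1_k·ũ^1_k + f̃^2_k·ũ^2_k < 0. -/
open Finset Filter

noncomputable section

section Aux

variable {d q r : ℝ}

lemma branch_claim (hd : 0 < d) (hq : 0 < q) (hr : 0 < r)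
    (m : ℕ) (u f : ℕ → ℝ)
    (hu : ∀ j, j ≤ m → 0 < u j)
    (hf : ∀ j, 1 ≤ j → j ≤ m → f j = d * u (j-1) - (d+q) * u j)
    (htop : f m = u m * (u m - r))
    (hrec : ∀ j, 1 ≤ j → j + 1 ≤ m → f j = f (j+1) + u j * (u j - r)) :
    ∀ j, 1 ≤ j → j ≤ m → 0 ≤ f j → r ≤ u j := by
  suffices h : ∀ n j, j + n = m → 1 ≤ j → 0 ≤ f j → r ≤ u j by
    intro j h1 h2 hfj
    exact h (m - j) j (by omega) h1 hfj
  intro n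
  induction n with
  | zero =>
    intro j hjm h1 hfj
    have hj : j = m := by omega
    subst hj
    have hup := hu j le_rfl
    nlinarith [htop]
  | succ n ih =>
    intro j hjm h1 hfj
    have hj1m : j + 1 ≤ m := by omega
    have hrecj := hrec j h1 hj1m
    rcases le_or_gt 0 (f (j+1)) with h0 | h0
    · have hr1 : r ≤ u (j+1) := ih (j+1) (by omega) (by omega) h0
      have hfj1 := hf (j+1) (by omega) hj1m
      simp only [Nat.add_sub_cancel] at hfj1
      have h3 : (d+q) * u (j+1) ≤ d * u j := by rw [hfj1] at h0; linarith
      have h2 : (d+q) * r ≤ (d+q) * u (j+1) :=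
        mul_le_mul_of_nonneg_left hr1 (by linarith)
      by_contra hcon
      push_neg at hcon
      have h4 : d * u j < d * r := mul_lt_mul_of_pos_left hcon hd
      nlinarith
    · have hupos := hu j (by omega)
      by_contra hcon
      push_neg at hcon
      have : u j * (u j - r) < 0 := mul_neg_of_pos_of_neg hupos (by linarith)
      linarith

lemma branch_propagate (hd : 0 < d) (hq : 0 < q) (hr : 0 < r)
    (m : ℕ) (u f : ℕ → ℝ)
    (hu : ∀ j, j ≤ m → 0 < u j)
    (hf : ∀ j, 1 ≤ j → j ≤ m → f j = d * u (j-1) - (d+q) * u j)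
    (htop : f m = u m * (u m - r))
    (hrec : ∀ j, 1 ≤ j → j + 1 ≤ m → f j = f (j+1) + u j * (u j - r))
    (k : ℕ) (hk : 1 ≤ k) (hkm : k ≤ m) (hfk : 0 ≤ f k) :
    ∀ j, 1 ≤ j → j ≤ k → 0 ≤ f j := by
  suffices h : ∀ n j, j + n = k → 1 ≤ j → 0 ≤ f j by
    intro j h1 h2
    exact h (k - j) j (by omega) h1
  intro n
  induction n with
  | zero =>
    intro j hjk _
    have : j = k := by omega
    subst this; exact hfk
  | succ n ih =>
    intro j hjk h1
    have hnext : 0 ≤ f (j+1) := ih (j+1) (by omega) (by omega)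
    have hj1m : j + 1 ≤ m := by omega
    have hr1 : r ≤ u (j+1) :=
      branch_claim hd hq hr m u f hu hf htop hrec (j+1) (by omega) hj1m hnext
    have hfj1 := hf (j+1) (by omega) hj1m
    simp only [Nat.add_sub_cancel] at hfj1
    have h3 : (d+q) * u (j+1) ≤ d * u j := by rw [hfj1] at hnext; linarith
    have h2 : (d+q) * r ≤ (d+q) * u (j+1) :=
      mul_le_mul_of_nonneg_left hr1 (by linarith)
    have hujr : r ≤ u j := by
      by_contra hcon
      push_neg at hcon
      have h4 : d * u j < d * r := mul_lt_mul_of_pos_left hcon hd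
      nlinarith
    have hrecj := hrec j h1 hj1m
    have hupos := hu j (by omega)
    nlinarith [mul_nonneg (by linarith : (0:ℝ) ≤ u j) (by linarith : (0:ℝ) ≤ u j - r)]

lemma main_claim (hd : 0 < d) (hq : 0 < q) (hr : 0 < r)
    (m3 : ℕ) (hm3 : 2 ≤ m3) (b g : ℕ → ℝ)
    (hb : ∀ j, 1 ≤ j → j ≤ m3 → 0 < b j)
    (hg : ∀ j, 2 ≤ j → j ≤ m3 → g j = d * b (j-1) - (d+q) * b j)
    (hg2 : g 2 = b 1 * (r - b 1))
    (hrec : ∀ j, 2 ≤ j → j + 1 ≤ m3 → g (j+1) = g j + b j * (r - b j))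
    (hJ : r < b m3) : g m3 < 0 := by
  by_contra hcon
  push_neg at hcon
  have key : ∀ j, 2 ≤ j → j ≤ m3 → 0 ≤ g j → r < b j → False := by
    intro j hj
    induction j, hj using Nat.le_induction with
    | base =>
      intro h2m hg0 hb2
      have hb1 := hb 1 (by omega) (by omega)
      have e := hg 2 (by norm_num) h2m
      simp only [show (2:ℕ) - 1 = 1 by norm_num] at e
      have h3 : (d+q) * b 2 ≤ d * b 1 := by rw [e] at hg0; linarith
      have h2 : (d+q) * r ≤ (d+q) * b 2 :=
        mul_le_mul_of_nonneg_left hb2.le (by linarith)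
      have hb1r : r < b 1 := by
        by_contra hc
        push_neg at hc
        have h4 : d * b 1 ≤ d * r := mul_le_mul_of_nonneg_left hc hd.le
        nlinarith
      have : b 1 * (r - b 1) < 0 := mul_neg_of_pos_of_neg hb1 (by linarith)
      linarith [hg2 ▸ hg0]
    | succ j hj ihj =>
      intro hj1m hg0 hbj1
      have hbj := hb j (by omega) (by omega)
      have e := hg (j+1) (by omega) hj1m
      simp only [Nat.add_sub_cancel] at e
      have h3 : (d+q) * b (j+1) ≤ d * b j := by rw [e] at hg0; linarith
      have h2 : (d+q) * r ≤ (d+q) * b (j+1) :=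
        mul_le_mul_of_nonneg_left hbj1.le (by linarith)
      have hbjr : r < b j := by
        by_contra hc
        push_neg at hc
        have h4 : d * b j ≤ d * r := mul_le_mul_of_nonneg_left hc hd.le
        nlinarith
      have e2 := hrec j (by omega) hj1m
      have hgj : 0 ≤ g j := by
        have : b j * (r - b j) < 0 := mul_neg_of_pos_of_neg hbj (by linarith)
        linarith
      exact ihj (by omega) hgj hbjr
  exact key m3 hm3 le_rfl hcon hJ

end Aux

lemma Y_core (d q r : ℝ) (hd : 0 < d) (hq : 0 < q) (hr : 0 < r)
    (mA mB m3 : ℕ) (hm3 : 2 ≤ m3)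
    (uA uB b fA fB g : ℕ → ℝ)
    (huA : ∀ j, j ≤ mA → 0 < uA j) (huB : ∀ j, j ≤ mB → 0 < uB j)
    (hb : ∀ j, 1 ≤ j → j ≤ m3 → 0 < b j)
    (huA0 : uA 0 = b m3) (huB0 : uB 0 = b m3)
    (hfA : ∀ j, 1 ≤ j → j ≤ mA → fA j = d * uA (j-1) - (d+q) * uA j)
    (htopA : fA mA = uA mA * (uA mA - r))
    (hrecA : ∀ j, 1 ≤ j → j + 1 ≤ mA → fA j = fA (j+1) + uA j * (uA j - r))
    (hfB : ∀ j, 1 ≤ j → j ≤ mB → fB j = d * uB (j-1) - (d+q) * uB j)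
    (htopB : fB mB = uB mB * (uB mB - r))
    (hrecB : ∀ j, 1 ≤ j → j + 1 ≤ mB → fB j = fB (j+1) + uB j * (uB j - r))
    (hg : ∀ j, 2 ≤ j → j ≤ m3 → g j = d * b (j-1) - (d+q) * b j)
    (hg2 : g 2 = b 1 * (r - b 1))
    (hgrec : ∀ j, 2 ≤ j → j + 1 ≤ m3 → g (j+1) = g j + b j * (r - b j))
    (hjun : fA 1 + fB 1 = g m3 + b m3 * (r - b m3))
    (k : ℕ) (hk1 : 1 ≤ k) (hkA : k ≤ mA) (hkB : k ≤ mB)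
    (hfAk : 0 ≤ fA k) :
    fA k + fB k < 0 ∧ uA k ≤ uB k ∧ fB k < 0 := by
  have hAllA : ∀ j, 1 ≤ j → j ≤ k → 0 ≤ fA j :=
    branch_propagate hd hq hr mA uA fA huA hfA htopA hrecA k hk1 hkA hfAk
  have hrA : ∀ j, 1 ≤ j → j ≤ k → r ≤ uA j := fun j h1 h2 =>
    branch_claim hd hq hr mA uA fA huA hfA htopA hrecA j h1 (le_trans h2 hkA) (hAllA j h1 h2)
  have hfA1 := hAllA 1 le_rfl hk1
  have hA1eq := hfA 1 le_rfl (le_trans hk1 hkA)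
  simp only [show (1:ℕ) - 1 = 0 by norm_num] at hA1eq
  have hJr : r < b m3 := by
    have h1 := hrA 1 le_rfl hk1
    rw [hA1eq, huA0] at hfA1
    by_contra hc
    push_neg at hc
    have h4 : (d+q) * r ≤ (d+q) * uA 1 := mul_le_mul_of_nonneg_left h1 (by linarith)
    have h5 : d * b m3 ≤ d * r := mul_le_mul_of_nonneg_left hc hd.le
    nlinarith
  have hgneg : g m3 < 0 := main_claim hd hq hr m3 hm3 b g hb hg hg2 hgrec hJr
  have hF1 : fA 1 + fB 1 < 0 := by
    rw [hjun]
    have : b m3 * (r - b m3) < 0 :=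
      mul_neg_of_pos_of_neg (by linarith) (by linarith)
    linarith
  have hnegB : ∀ j, 1 ≤ j → j ≤ mB → fB j < 0 := by
    intro j h1 h2
    by_contra hc
    push_neg at hc
    have := branch_propagate hd hq hr mB uB fB huB hfB htopB hrecB j h1 h2 hc 1 le_rfl h1
    linarith
  have hcomp : ∀ j, j ≤ k → uA j ≤ uB j := by
    intro j
    induction j with
    | zero => intro _; rw [huA0, huB0]
    | succ j ih =>
      intro hjk
      have hij := ih (by omega)
      have hA := hAllA (j+1) (by omega) hjk
      have eA := hfA (j+1) (by omega) (le_trans hjk hkA)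
      have eB := hfB (j+1) (by omega) (le_trans hjk hkB)
      simp only [Nat.add_sub_cancel] at eA eB
      have hB := hnegB (j+1) (by omega) (le_trans hjk hkB)
      have h1 : (d+q) * uA (j+1) ≤ d * uA j := by rw [eA] at hA; linarith
      have h2 : d * uB j < (d+q) * uB (j+1) := by rw [eB] at hB; linarith
      have h3 : d * uA j ≤ d * uB j := mul_le_mul_of_nonneg_left hij hd.le
      have h4 : (d+q) * uA (j+1) < (d+q) * uB (j+1) := by linarith
      exact le_of_lt ((mul_lt_mul_iff_right₀ (by linarith : (0:ℝ) < d + q)).mp h4)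
  have hFk : fA k + fB k < 0 := by
    have mono : ∀ j, 1 ≤ j → j ≤ k → fA j + fB j ≤ fA 1 + fB 1 := by
      intro j
      induction j with
      | zero => intro h1 _; exact absurd h1 (by norm_num)
      | succ j ih =>
        intro h1 hk'
        rcases Nat.eq_zero_or_pos j with h0 | hj1
        · subst h0; exact le_rfl
        · have hih := ih hj1 (by omega)
          have eA := hrecA j hj1 (le_trans hk' hkA)
          have eB := hrecB j hj1 (le_trans hk' hkB)
          have hrAj := hrA j hj1 (by omega)
          have hrBj : r ≤ uB j := le_trans hrAj (hcomp j (by omega))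
          have tA : 0 ≤ uA j * (uA j - r) :=
            mul_nonneg (by linarith) (by linarith)
          have tB : 0 ≤ uB j * (uB j - r) :=
            mul_nonneg (by linarith) (by linarith)
          linarith
    exact lt_of_le_of_lt (mono k hk1 le_rfl) hF1
  exact ⟨hFk, hcomp k le_rfl, hnegB k hk1 hkB⟩

/-- **Lemma 4.2(ii)**. -/
theorem stmt_13
    (m1 m2 m3 : ℕ) (d1 q1 r : ℝ)
    (hm1 : 1 ≤ m1) (hm12 : m1 ≤ m2) (hm3 : 2 ≤ m3)
    (hd1 : 0 < d1) (hq1 : 0 < q1) (hr : 0 < r)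
    (w : ℕ → ℕ → ℝ)
    (hw : YSingleEquilibrium m1 m2 m3 d1 q1 r w) :
    ∀ k, 1 ≤ k → k ≤ m1 →
      Yf m1 m2 m3 d1 q1 w 1 k + Yf m1 m2 m3 d1 q1 w 2 k < 0 ∧
      Yf m1 m2 m3 d1 q1 w 1 k * w 1 k + Yf m1 m2 m3 d1 q1 w 2 k * w 2 k < 0 := by
  obtain ⟨hpos, h10, h20, hint, hint3, hup, hdown, hjun⟩ := hw
  have hseg1 : seg m1 m2 m3 1 = m1 := rfl
  have hseg2 : seg m1 m2 m3 2 = m2 := rfl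
  have hseg3 : seg m1 m2 m3 3 = m3 := rfl
  have hw3 : ∀ j, 1 ≤ j → j ≤ m3 → 0 < w 3 j := fun j h1 h2 =>
    hpos 3 j (by tauto) h1 (by rw [hseg3]; exact h2)
  have hJpos : 0 < w 3 m3 := hw3 m3 (by omega) le_rfl
  have hu1 : ∀ j, j ≤ m1 → 0 < w 1 j := by
    intro j hj
    rcases Nat.eq_zero_or_pos j with h | h
    · subst h; rw [h10]; exact hJpos
    · exact hpos 1 j (by tauto) h (by rw [hseg1]; exact hj)
  have hu2 : ∀ j, j ≤ m2 → 0 < w 2 j := by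
    intro j hj
    rcases Nat.eq_zero_or_pos j with h | h
    · subst h; rw [h20]; exact hJpos
    · exact hpos 2 j (by tauto) h (by rw [hseg2]; exact hj)
  -- branch equation facts
  have htop1 : d1 * w 1 (m1-1) - (d1+q1) * w 1 m1 = w 1 m1 * (w 1 m1 - r) := by
    have h := hup 1 (Or.inl rfl)
    rw [hseg1] at h
    simp only [sub_zero] at h
    linear_combination h
  have htop2 : d1 * w 2 (m2-1) - (d1+q1) * w 2 m2 = w 2 m2 * (w 2 m2 - r) := by
    have h := hup 2 (Or.inr rfl)
    rw [hseg2] at h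
    simp only [sub_zero] at h
    linear_combination h
  have hrec1 : ∀ j, 1 ≤ j → j + 1 ≤ m1 →
      (d1 * w 1 (j-1) - (d1+q1) * w 1 j)
        = (d1 * w 1 ((j+1)-1) - (d1+q1) * w 1 (j+1)) + w 1 j * (w 1 j - r) := by
    intro j h1 h2
    have h := hint 1 (Or.inl rfl) j h1 (by rw [hseg1]; exact h2)
    simp only [sub_zero] at h
    simp only [Nat.add_sub_cancel]
    linear_combination h
  have hrec2 : ∀ j, 1 ≤ j → j + 1 ≤ m2 →
      (d1 * w 2 (j-1) - (d1+q1) * w 2 j)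
        = (d1 * w 2 ((j+1)-1) - (d1+q1) * w 2 (j+1)) + w 2 j * (w 2 j - r) := by
    intro j h1 h2
    have h := hint 2 (Or.inr rfl) j h1 (by rw [hseg2]; exact h2)
    simp only [sub_zero] at h
    simp only [Nat.add_sub_cancel]
    linear_combination h
  -- main channel facts
  have hg2' : d1 * w 3 (2-1) - (d1+q1) * w 3 2 = w 3 1 * (r - w 3 1) := by
    simp only [sub_zero] at hdown
    simp only [show (2:ℕ) - 1 = 1 by norm_num]
    linear_combination -hdown
  have hgrec' : ∀ j, 2 ≤ j → j + 1 ≤ m3 →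
      (d1 * w 3 ((j+1)-1) - (d1+q1) * w 3 (j+1))
        = (d1 * w 3 (j-1) - (d1+q1) * w 3 j) + w 3 j * (r - w 3 j) := by
    intro j h1 h2
    have h := hint3 j h1 h2
    simp only [sub_zero] at h
    simp only [Nat.add_sub_cancel]
    linear_combination -h
  have hjun' : (d1 * w 1 (1-1) - (d1+q1) * w 1 1) + (d1 * w 2 (1-1) - (d1+q1) * w 2 1)
      = (d1 * w 3 (m3-1) - (d1+q1) * w 3 m3) + w 3 m3 * (r - w 3 m3) := by
    simp only [sub_zero] at hjun
    simp only [show (1:ℕ) - 1 = 0 by norm_num]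
    rw [h10, h20]
    linear_combination -hjun
  intro k hk1 hkm1
  have hkm2 : k ≤ m2 := le_trans hkm1 hm12
  have e1 : Yf m1 m2 m3 d1 q1 w 1 k = d1 * w 1 (k-1) - (d1+q1) * w 1 k := by
    unfold Yf
    rw [if_neg (by norm_num), if_pos ⟨hk1, by rw [hseg1]; exact hkm1⟩]
  have e2 : Yf m1 m2 m3 d1 q1 w 2 k = d1 * w 2 (k-1) - (d1+q1) * w 2 k := by
    unfold Yf
    rw [if_neg (by norm_num), if_pos ⟨hk1, by rw [hseg2]; exact hkm2⟩]
  rw [e1, e2]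
  have hw1k : 0 < w 1 k := hu1 k hkm1
  have hw2k : 0 < w 2 k := hu2 k hkm2
  rcases le_or_gt 0 (d1 * w 1 (k-1) - (d1+q1) * w 1 k) with hc1 | hc1
  · -- branch 1 has nonnegative flux at k
    obtain ⟨hsum, hle, hf2k⟩ :=
      Y_core d1 q1 r hd1 hq1 hr m1 m2 m3 hm3 (w 1) (w 2) (w 3)
        (fun j => d1 * w 1 (j-1) - (d1+q1) * w 1 j)
        (fun j => d1 * w 2 (j-1) - (d1+q1) * w 2 j)
        (fun j => d1 * w 3 (j-1) - (d1+q1) * w 3 j)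
        hu1 hu2 hw3 h10 h20
        (fun j _ _ => rfl) htop1 hrec1
        (fun j _ _ => rfl) htop2 hrec2
        (fun j _ _ => rfl) hg2' hgrec' hjun'
        k hk1 hkm1 hkm2 hc1
    refine ⟨hsum, ?_⟩
    have t1 : (d1 * w 1 (k-1) - (d1+q1) * w 1 k) * w 1 k
        ≤ (d1 * w 1 (k-1) - (d1+q1) * w 1 k) * w 2 k :=
      mul_le_mul_of_nonneg_left hle hc1
    have t2 : ((d1 * w 1 (k-1) - (d1+q1) * w 1 k) + (d1 * w 2 (k-1) - (d1+q1) * w 2 k))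
        * w 2 k < 0 := mul_neg_of_neg_of_pos hsum hw2k
    nlinarith [t1, t2]
  · rcases le_or_gt 0 (d1 * w 2 (k-1) - (d1+q1) * w 2 k) with hc2 | hc2
    · -- branch 2 has nonnegative flux at k
      obtain ⟨hsum, hle, hf1k⟩ :=
        Y_core d1 q1 r hd1 hq1 hr m2 m1 m3 hm3 (w 2) (w 1) (w 3)
          (fun j => d1 * w 2 (j-1) - (d1+q1) * w 2 j)
          (fun j => d1 * w 1 (j-1) - (d1+q1) * w 1 j)
          (fun j => d1 * w 3 (j-1) - (d1+q1) * w 3 j)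
          hu2 hu1 hw3 h20 h10
          (fun j _ _ => rfl) htop2 hrec2
          (fun j _ _ => rfl) htop1 hrec1
          (fun j _ _ => rfl) hg2' hgrec' (by linear_combination hjun')
          k hk1 hkm2 hkm1 hc2
      refine ⟨by linarith, ?_⟩
      have t1 : (d1 * w 2 (k-1) - (d1+q1) * w 2 k) * w 2 k
          ≤ (d1 * w 2 (k-1) - (d1+q1) * w 2 k) * w 1 k :=
        mul_le_mul_of_nonneg_left hle hc2
      have t2 : ((d1 * w 2 (k-1) - (d1+q1) * w 2 k) + (d1 * w 1 (k-1) - (d1+q1) * w 1 k))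
          * w 1 k < 0 := mul_neg_of_neg_of_pos hsum hw1k
      nlinarith [t1, t2]
    · -- both fluxes negative
      refine ⟨by linarith, ?_⟩
      have t1 := mul_neg_of_neg_of_pos hc1 hw1k
      have t2 := mul_neg_of_neg_of_pos hc2 hw2k
      linarith
end
end
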